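/- arXiv:2012.08400 — 11 statements merged into one kernel-verified Lean document; each statement's English description precedes it below -/
import Mathlib

section
/- Let (X,r) be a simple solution of the Yang–Baxter equation. If |X| > 2, then (X,r) is indecomposable. -/
open Function

/-- The map `r₁₂ = r × id` on `X³`. -/
def yb12 {X : Type*} (r : X × X → X × X) : X × X × X → X × X × X :=
  fun p => ((r (p.1, p.2.1)).1, ((r (p.1, p.2.1)).2, p.2.2))

/-- The map `r₂₃ = id × r` on `X³`. -/
def yb23 {X : Type*} (r : X × X → X × X) : X × X × X → X × X × X :=
  fun p => (p.1, r p.2)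

/-- `(X, r)` is an involutive non-degenerate set-theoretic solution of the
Yang–Baxter equation. -/
structure IsYBSolution {X : Type*} (r : X × X → X × X) : Prop where
  invol : ∀ p, r (r p) = p
  sigma_bij : ∀ x, Function.Bijective (fun y => (r (x, y)).1)
  gamma_bij : ∀ y, Function.Bijective (fun x => (r (x, y)).2)
  braid : yb12 r ∘ yb23 r ∘ yb12 r = yb23 r ∘ yb12 r ∘ yb23 r

/-- A homomorphism of solutions: `f (σ_x y) = σ'_{f x} (f y)`. -/
def IsSolHom {X Y : Type*} (r : X × X → X × X) (s : Y × Y → Y × Y) (f : X → Y) : Prop :=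
  ∀ x y, f (r (x, y)).1 = (s (f x, f y)).1

/-- The permutation group `G(X,r)`: the subgroup of `Sym(X)` generated by the
permutations `σ_x`. -/
def permGroup {X : Type*} (r : X × X → X × X) : Subgroup (Equiv.Perm X) :=
  Subgroup.closure {g : Equiv.Perm X | ∃ x, ∀ y, g y = (r (x, y)).1}

/-- `(X,r)` is indecomposable: `G(X,r)` acts transitively on `X`. -/
def IsIndecomposable {X : Type*} (r : X × X → X × X) : Prop :=
  ∀ x y : X, ∃ g ∈ permGroup r, g x = y

/-- `(X,r)` is irretractable: `σ_x = σ_y` implies `x = y`. -/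
def IsIrretractable {X : Type*} (r : X × X → X × X) : Prop :=
  ∀ x y : X, (∀ z, (r (x, z)).1 = (r (y, z)).1) → x = y

/-- `(X,r)` is a simple solution: `|X| > 1` and every surjective homomorphism of
solutions from `(X,r)` is either bijective or has a one-element target. -/
def IsSimpleSolution {X : Type u} (r : X × X → X × X) : Prop :=
  Nontrivial X ∧ ∀ (Y : Type u) (s : Y × Y → Y × Y), IsYBSolution s →
    ∀ f : X → Y, Function.Surjective f → IsSolHom r s f →
      Function.Bijective f ∨ Subsingleton Y

/-!
The orbit map of `G(X,r)` is a homomorphism onto the trivial solution `(x, y) ↦ (y, x)` on the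
orbits, since `σ_x y` lies in the orbit of `y`. By simplicity it either has a one-point target,
which is indecomposability, or it is injective; then every `σ_x` is the identity and `r` itself is
trivial. But a trivial solution on more than two points maps non-injectively onto the trivial
solution on two points, so it is not simple.
-/

open MulAction

lemma IsYBSolution.swap {Y : Type*} : IsYBSolution (Prod.swap : Y × Y → Y × Y) :=
  ⟨fun _ => rfl, fun _ => bijective_id, fun _ => bijective_id, rfl⟩

lemma isSolHom_swap_iff {X Y : Type*} (r : X × X → X × X) (f : X → Y) :
    IsSolHom r Prod.swap f ↔ ∀ x y, f (r (x, y)).1 = f y :=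
  Iff.rfl

lemma isSolHom_swap_swap {X Y : Type*} (f : X → Y) : IsSolHom Prod.swap Prod.swap f :=
  fun _ _ => rfl

lemma eq_swap_of_fst_eq {X : Type*} {r : X × X → X × X} (hinv : Involutive r)
    (hfst : ∀ x y, (r (x, y)).1 = y) : r = Prod.swap := by
  funext ⟨x, y⟩
  refine Prod.ext (hfst x y) ?_
  have hry : r (x, y) = (y, (r (x, y)).2) := Prod.ext (hfst x y) rfl
  have := hfst y (r (x, y)).2
  rw [← hry, hinv] at this
  exact this.symm

lemma isIndecomposable_iff_isPretransitive {X : Type*} (r : X × X → X × X) :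
    IsIndecomposable r ↔ IsPretransitive (permGroup r) X :=
  ⟨fun h => ⟨fun x y => by obtain ⟨g, hg, hgx⟩ := h x y; exact ⟨⟨g, hg⟩, hgx⟩⟩,
    fun h x y => by obtain ⟨g, hgx⟩ := exists_smul_eq (permGroup r) x y; exact ⟨g, g.2, hgx⟩⟩

lemma IsYBSolution.fst_mem_orbit {X : Type*} {r : X × X → X × X} (hr : IsYBSolution r)
    (x y : X) : (r (x, y)).1 ∈ orbit (permGroup r) y :=
  ⟨⟨Equiv.ofBijective _ (hr.sigma_bij x), Subgroup.subset_closure ⟨x, fun _ => rfl⟩⟩, rfl⟩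

lemma IsYBSolution.isSolHom_orbitRel_mk {X : Type*} {r : X × X → X × X} (hr : IsYBSolution r) :
    IsSolHom r Prod.swap (Quotient.mk (orbitRel (permGroup r) X)) :=
  (isSolHom_swap_iff _ _).2 fun x y => Quotient.sound (hr.fst_mem_orbit x y)

lemma not_isSimpleSolution_swap {X : Type u} (hcard : 2 < Cardinal.mk X) :
    ¬ IsSimpleSolution (Prod.swap : X × X → X × X) := by
  classical
  rintro ⟨-, hsimple⟩
  have h3 : 3 ≤ Cardinal.mk X := by
    simpa [two_add_one_eq_three] using Cardinal.add_one_le_of_lt hcard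
  obtain ⟨a, b, hba⟩ := Cardinal.two_le_iff.1 (h3.trans' (by norm_num))
  obtain ⟨c, hca, hcb⟩ := Cardinal.exists_ne_ne_of_three_le h3 a b
  let f : X → ULift.{u} Bool := fun x => ⟨decide (x = a)⟩
  have hf : Surjective f := by
    rintro ⟨_ | _⟩
    · exact ⟨b, by simp [f, hba.symm]⟩
    · exact ⟨a, by simp [f]⟩
  rcases hsimple _ _ IsYBSolution.swap f hf (isSolHom_swap_swap f) with hbij | hsub
  · exact hcb (hbij.1 (by simp [f, hca, hba.symm]))
  · exact absurd (hsub.elim ⟨true⟩ ⟨false⟩) (by simp)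

/-- A simple solution of the YBE on a set with more than two
elements is indecomposable. -/
theorem simple_solution_indecomposable {X : Type u} (r : X × X → X × X)
    (hsol : IsYBSolution r) (hsimple : IsSimpleSolution r)
    (hcard : 2 < Cardinal.mk X) :
    IsIndecomposable r := by
  rw [isIndecomposable_iff_isPretransitive, pretransitive_iff_subsingleton_quotient]
  rcases hsimple.2 _ _ IsYBSolution.swap _ Quotient.mk_surjective hsol.isSolHom_orbitRel_mk
    with hbij | hsub
  · have hswap : r = Prod.swap := eq_swap_of_fst_eq hsol.invol fun x y =>
      hbij.1 (hsol.isSolHom_orbitRel_mk x y)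
    exact absurd (hswap ▸ hsimple) (not_isSimpleSolution_swap hcard)
  · exact hsub
end

section
/- Let (X,r) be a finite simple solution of the Yang–Baxter equation. If |X| is not a prime number, then (X,r) is irretractable. -/
open Function

/-!
Suppose `σ_a = σ_b` with `a ≠ b`. The retraction `X → X / (σ_x = σ_y)` is a surjective
homomorphism onto a solution that is not injective, so by simplicity its image is a point:
all `σ_x` equal one permutation `π`, and `r (x, y) = (π y, π⁻¹ x)`. Then any `π`-equivariant
surjection `f : X → Y`, with `f ∘ π = τ ∘ f`, is a homomorphism onto the permutation solution
`(u, v) ↦ (τ v, τ⁻¹ u)`, hence a bijection unless `Y` is a point. Such an `f` onto `ZMod p`,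
`p` prime, always exists: the indicator of a `π`-orbit if `π` is not transitive (`p = 2`), and
otherwise the cyclic coordinate `π ^ k • a ↦ k` reduced modulo a prime divisor of `|X|`.
So `|X| = p`.
-/

namespace IsYBSolution

variable {X : Type*} {r : X × X → X × X} (hsol : IsYBSolution r)

noncomputable def sigma (x : X) : Equiv.Perm X :=
  Equiv.ofBijective _ (hsol.sigma_bij x)

@[simp]
theorem sigma_apply (x y : X) : hsol.sigma x y = (r (x, y)).1 := rfl

theorem snd_eq_sigma_symm (x y : X) : (r (x, y)).2 = (hsol.sigma (r (x, y)).1).symm x := by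
  rw [Equiv.eq_symm_apply, sigma_apply, Prod.mk.eta, hsol.invol]

theorem sigma_mul_sigma (x y : X) :
    hsol.sigma (r (x, y)).1 * hsol.sigma (r (x, y)).2 = hsol.sigma x * hsol.sigma y :=
  Equiv.ext fun z => by
    simpa [yb12, yb23] using congrArg Prod.fst (congrFun hsol.braid (x, y, z))

theorem sigma_mul_sigma_sigma_symm (x u : X) :
    hsol.sigma u * hsol.sigma ((hsol.sigma u).symm x) =
      hsol.sigma x * hsol.sigma ((hsol.sigma x).symm u) := by
  have hu : (r (x, (hsol.sigma x).symm u)).1 = u := (hsol.sigma x).apply_symm_apply u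
  have := hsol.sigma_mul_sigma x ((hsol.sigma x).symm u)
  rwa [hsol.snd_eq_sigma_symm, hu] at this

theorem sigma_sigma_symm_apply_eq {a b : X} (hab : hsol.sigma a = hsol.sigma b) (x : X) :
    hsol.sigma ((hsol.sigma x).symm a) = hsol.sigma ((hsol.sigma x).symm b) :=
  mul_left_cancel <| by
    rw [← sigma_mul_sigma_sigma_symm _ x a, ← sigma_mul_sigma_sigma_symm _ x b, hab]

theorem sigma_sigma_apply_eq [Finite X] {a b : X} (hab : hsol.sigma a = hsol.sigma b) (x : X) :
    hsol.sigma (hsol.sigma x a) = hsol.sigma (hsol.sigma x b) := by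
  -- in the finite group `Perm X`, `σ_x` is a power of `σ_x⁻¹`
  obtain ⟨n, hn⟩ : hsol.sigma x ∈ Submonoid.powers (hsol.sigma x)⁻¹ :=
    mem_powers_iff_mem_zpowers.2 (by rw [Subgroup.zpowers_inv]; exact Subgroup.mem_zpowers _)
  rw [← hn]
  clear hn
  induction n with
  | zero => exact hab
  | succ n ih =>
    simp only [pow_succ', Equiv.Perm.mul_apply, Equiv.Perm.inv_def]
    exact hsol.sigma_sigma_symm_apply_eq ih x

end IsYBSolution

def IsSolCongruence {X : Type*} (r : X × X → X × X) (S : Setoid X) : Prop :=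
  ∀ ⦃x x' y y' : X⦄, S x x' → S y y' →
    S (r (x, y)).1 (r (x', y')).1 ∧ S (r (x, y)).2 (r (x', y')).2

namespace IsSolCongruence

variable {X : Type*} {r : X × X → X × X} {S : Setoid X} (hS : IsSolCongruence r S)

def quotientMap : Quotient S × Quotient S → Quotient S × Quotient S := fun p =>
  Quotient.lift₂ (fun x y => (Quotient.mk S (r (x, y)).1, Quotient.mk S (r (x, y)).2))
    (fun _ _ _ _ hx hy => Prod.ext (Quotient.sound (hS hx hy).1) (Quotient.sound (hS hx hy).2))
    p.1 p.2

theorem quotientMap_mk (x y : X) :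
    hS.quotientMap (Quotient.mk S x, Quotient.mk S y) =
      (Quotient.mk S (r (x, y)).1, Quotient.mk S (r (x, y)).2) :=
  rfl

theorem isSolHom_mk : IsSolHom r hS.quotientMap (Quotient.mk S) := fun _ _ => rfl

theorem isYBSolution_quotientMap [Finite X] (hsol : IsYBSolution r) :
    IsYBSolution hS.quotientMap where
  invol p := by
    obtain ⟨u, v⟩ := p
    induction u using Quotient.ind
    induction v using Quotient.ind
    rw [quotientMap_mk, quotientMap_mk, Prod.mk.eta, hsol.invol]
  sigma_bij u := Finite.surjective_iff_bijective.1 fun w => by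
    induction u using Quotient.ind with | _ x
    induction w using Quotient.ind with | _ z
    obtain ⟨y, hy⟩ := (hsol.sigma_bij x).2 z
    exact ⟨Quotient.mk S y, congrArg (Quotient.mk S) hy⟩
  gamma_bij v := Finite.surjective_iff_bijective.1 fun w => by
    induction v using Quotient.ind with | _ y
    induction w using Quotient.ind with | _ z
    obtain ⟨x, hx⟩ := (hsol.gamma_bij y).2 z
    exact ⟨Quotient.mk S x, congrArg (Quotient.mk S) hx⟩
  braid := by
    funext p
    obtain ⟨u, v, w⟩ := p
    induction u using Quotient.ind with | _ x
    induction v using Quotient.ind with | _ y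
    induction w using Quotient.ind with | _ z
    let F3 : X × X × X → Quotient S × Quotient S × Quotient S :=
      fun t => (Quotient.mk S t.1, Quotient.mk S t.2.1, Quotient.mk S t.2.2)
    have h12 : ∀ t, yb12 hS.quotientMap (F3 t) = F3 (yb12 r t) := fun _ => rfl
    have h23 : ∀ t, yb23 hS.quotientMap (F3 t) = F3 (yb23 r t) := fun _ => rfl
    change yb12 _ (yb23 _ (yb12 _ (F3 (x, y, z)))) = yb23 _ (yb12 _ (yb23 _ (F3 (x, y, z))))
    rw [h12, h23, h12, h23, h12, h23]
    exact congrArg F3 (congrFun hsol.braid (x, y, z))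

end IsSolCongruence

/-- The quotient by `Setoid.ker hsol.sigma` is the retraction of `(X, r)`. -/
theorem IsYBSolution.isSolCongruence_ker_sigma {X : Type*} [Finite X] {r : X × X → X × X}
    (hsol : IsYBSolution r) : IsSolCongruence r (Setoid.ker hsol.sigma) := by
  intro x x' y y' (hx : hsol.sigma x = hsol.sigma x') hy
  have h1 : hsol.sigma (r (x, y)).1 = hsol.sigma (r (x', y')).1 := by
    rw [← hsol.sigma_apply, ← hsol.sigma_apply, hx]
    exact hsol.sigma_sigma_apply_eq hy x'
  refine ⟨h1, ?_⟩
  change hsol.sigma (r (x, y)).2 = hsol.sigma (r (x', y')).2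
  rw [hsol.snd_eq_sigma_symm, hsol.snd_eq_sigma_symm, h1]
  exact hsol.sigma_sigma_symm_apply_eq hx _

def permSolution {Y : Type*} (τ : Equiv.Perm Y) : Y × Y → Y × Y :=
  fun p => (τ p.2, τ.symm p.1)

theorem isYBSolution_permSolution {Y : Type*} (τ : Equiv.Perm Y) :
    IsYBSolution (permSolution τ) where
  invol p := by simp [permSolution]
  sigma_bij _ := τ.bijective
  gamma_bij _ := τ.symm.bijective
  braid := by
    funext p
    simp [yb12, yb23, permSolution]

theorem isSolHom_permSolution {X Y : Type*} {r : X × X → X × X} {π : Equiv.Perm X}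
    (hσ : ∀ x y, (r (x, y)).1 = π y) {τ : Equiv.Perm Y} {f : X → Y} (hf : Semiconj f π τ) :
    IsSolHom r (permSolution τ) f := fun x y => by
  rw [hσ, hf.eq]
  rfl

theorem IsSimpleSolution.card_eq_of_semiconj {X : Type u} {r : X × X → X × X}
    (hs : IsSimpleSolution r) {π : Equiv.Perm X} (hσ : ∀ x y, (r (x, y)).1 = π y)
    {Y : Type} [Nontrivial Y] {τ : Equiv.Perm Y} {f : X → Y} (hf : Surjective f)
    (hfτ : Semiconj f π τ) : Nat.card X = Nat.card Y := by
  let e : Y ≃ ULift.{u} Y := Equiv.ulift.symm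
  have hfτ' : Semiconj (e ∘ f) π (e.permCongr τ) := fun x => by simp [hfτ.eq]
  rcases hs.2 _ _ (isYBSolution_permSolution _) (e ∘ f) (e.surjective.comp hf)
    (isSolHom_permSolution hσ hfτ') with hbij | hsub
  · rw [Nat.card_eq_of_bijective _ hbij, Nat.card_ulift]
  · exact absurd hsub (not_subsingleton _)

section

open MulAction Subgroup

theorem MulAction.orbitZPowersEquiv_generator_smul {α β : Type*} [Group α] [MulAction α β]
    (a : α) (b : β) (y : orbit (zpowers a) b) :
    orbitZPowersEquiv a b ((⟨a, mem_zpowers a⟩ : zpowers a) • y) =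
      orbitZPowersEquiv a b y + 1 := by
  obtain ⟨k, rfl⟩ := (orbitZPowersEquiv a b).symm.surjective y
  have : (⟨a, mem_zpowers a⟩ : zpowers a) • (orbitZPowersEquiv a b).symm k =
      (orbitZPowersEquiv a b).symm ((1 + k.cast : ℤ)) := by
    rw [orbitZPowersEquiv_symm_apply, orbitZPowersEquiv_symm_apply', smul_smul, ← zpow_one_add]
  rw [this, Equiv.apply_symm_apply, Equiv.apply_symm_apply, Int.cast_add, ZMod.intCast_zmod_cast,
    Int.cast_one, add_comm]

namespace Equiv.Perm

variable {X : Type*} (π : Perm X)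

theorem apply_mem_orbit_zpowers_iff {a y : X} :
    π y ∈ orbit (zpowers π) a ↔ y ∈ orbit (zpowers π) a := by
  change (⟨π, mem_zpowers π⟩ : zpowers π) • y ∈ _ ↔ _
  rw [← orbit_eq_iff, orbit_smul, orbit_eq_iff]

theorem exists_surjective_invariant_zmod_two {a x : X} (hx : x ∉ orbit (zpowers π) a) :
    ∃ f : X → ZMod 2, Surjective f ∧ Semiconj f π (Equiv.refl _) := by
  classical
  refine ⟨fun y => if y ∈ orbit (zpowers π) a then 0 else 1, fun i => ?_, fun y => ?_⟩
  · fin_cases i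
    · exact ⟨a, if_pos (mem_orbit_self a)⟩
    · exact ⟨x, if_neg hx⟩
  · simp only [apply_mem_orbit_zpowers_iff, Equiv.refl_apply]

theorem exists_surjective_semiconj_addRight_one {a : X} (ha : ∀ x, x ∈ orbit (zpowers π) a)
    {d : ℕ} (hd : d ∣ minimalPeriod (π • ·) a) :
    ∃ f : X → ZMod d, Surjective f ∧ Semiconj f π (Equiv.addRight 1) := by
  let e := orbitZPowersEquiv π a
  refine ⟨fun x => ZMod.castHom hd (ZMod d) (e ⟨x, ha x⟩),
    (ZMod.castHom_surjective hd).comp (e.surjective.comp fun y => ⟨y, rfl⟩), fun x => ?_⟩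
  have : (⟨π x, ha _⟩ : orbit (zpowers π) a) = (⟨π, mem_zpowers π⟩ : zpowers π) • ⟨x, ha x⟩ := rfl
  simp only [this, orbitZPowersEquiv_generator_smul, map_add, map_one, Equiv.coe_addRight, e]

theorem exists_prime_surjective_semiconj [Finite X] [Nontrivial X] :
    ∃ p, p.Prime ∧ ∃ (f : X → ZMod p) (τ : Perm (ZMod p)), Surjective f ∧ Semiconj f π τ := by
  obtain ⟨a⟩ := (inferInstance : Nonempty X)
  by_cases ha : ∀ x, x ∈ orbit (zpowers π) a
  · have hcard : minimalPeriod (π • ·) a = Nat.card X :=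
      calc _ = Nat.card (ZMod _) := (Nat.card_zmod _).symm
        _ = Nat.card (orbit (zpowers π) a) := (Nat.card_congr (orbitZPowersEquiv π a)).symm
        _ = Nat.card X := Nat.card_congr (Equiv.subtypeUnivEquiv ha)
    have hne : minimalPeriod (π • ·) a ≠ 1 := hcard ▸ Finite.one_lt_card.ne'
    obtain ⟨f, hf, hfτ⟩ := exists_surjective_semiconj_addRight_one π ha (Nat.minFac_dvd _)
    exact ⟨_, Nat.minFac_prime hne, f, _, hf, hfτ⟩
  · obtain ⟨x, hx⟩ := not_forall.1 ha
    obtain ⟨f, hf, hfτ⟩ := exists_surjective_invariant_zmod_two π hx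
    exact ⟨2, Nat.prime_two, f, _, hf, hfτ⟩

end Equiv.Perm

end

/-- A finite simple solution of the YBE whose cardinality is not a
prime number is irretractable. -/
theorem finite_simple_solution_irretractable {X : Type u} [Finite X]
    (r : X × X → X × X)
    (hsol : IsYBSolution r) (hsimple : IsSimpleSolution r)
    (hcard : ¬ (Nat.card X).Prime) :
    IsIrretractable r := by
  intro a b hab
  have hS := hsol.isSolCongruence_ker_sigma
  have : Nontrivial X := hsimple.1
  rcases hsimple.2 _ _ (hS.isYBSolution_quotientMap hsol) _ Quotient.mk_surjective hS.isSolHom_mk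
    with hbij | hsub
  · exact hbij.1 (Quotient.sound (Equiv.ext hab))
  have hσ : ∀ x y, (r (x, y)).1 = hsol.sigma a y := fun x =>
    DFunLike.congr_fun (Quotient.exact (Subsingleton.elim
      (Quotient.mk (Setoid.ker hsol.sigma) x) (Quotient.mk _ a)))
  obtain ⟨p, hp, f, τ, hf, hfτ⟩ := (hsol.sigma a).exists_prime_surjective_semiconj
  have : Fact p.Prime := ⟨hp⟩
  refine absurd ?_ hcard
  rwa [hsimple.card_eq_of_semiconj hσ hf hfτ, Nat.card_zmod]
end

section
/- Let n > 1 be an integer, let t ∈ ℤ/(n) be invertible, and let j₀,…,j_{n−1} ∈ ℤ/(n) (indices read modulo n) satisfy j_i = j_{−i} for all i and j_{tˢi} = tˢ j_i − (tˢ − 1) j₀ for all i ∈ ℤ/(n) and all s ∈ ℤ. Suppose that for every nonzero i ∈ ℤ/(n) there exists k ∈ ℤ/(n) such that j_{i+k} − j_k is invertible. Define r : (ℤ/(n))² × (ℤ/(n))² → (ℤ/(n))² × (ℤ/(n))² by r((i,j),(k,l)) = (σ_{(i,j)}(k,l), σ_{σ_{(i,j)}(k,l)}⁻¹(i,j)),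 where σ_{(i,j)}(k,l) = (tk + j, t(l − j_{tk+j−i})). Then ((ℤ/(n))², r) is an indecomposable and irretractable solution of the YBE. If, moreover, (i) j₀ − j_i is invertible for every nonzero i ∈ ℤ/(n), and (ii) j_i − j_k is invertible whenever j_i ≠ j_k, then ((ℤ/(n))², r) is a simple solution of the YBE. -/
open Function

/-! The map `r (x, y) = (σ_x y, σ_{σ_x y}⁻¹ x)` is involutive for every family of permutations
`σ`. For `σ_{(i,j)} (k, l) = (t k + j, t (l - J (t k + j - i)))` the braid relation and the
bijectivity of the maps `γ_y` are direct computations using `J (-a) = J a` and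
`J (t a) = t J a - (t - 1) J 0`. The composites `σ_{(p',0)}⁻¹ σ_{(p,0)}` are the shears
`(a, b) ↦ (a, b + J (t a - p') - J (t a - p))`; a shear by a unit sweeps out a whole column, which
gives indecomposability.

The kernel `R` of a homomorphism is an equivalence relation compatible with `σ` and `σ⁻¹` in both
arguments. A vertical pair `(u, v) ~ (u, v + c)` gives, through `σ⁻¹` in the subscript, horizontal
translations by `t⁻¹ c` everywhere; these give, through `σ` in the subscript, vertical translations
by a unit, hence all translations, so `R` is total. A horizontal pair gives a vertical pair because
`J` separates points. Shears change the difference `j' - j` of a pair `(i, j) ~ (i', j')` with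
`i ≠ i'` by the multiples of `2 (J 0 - J (t (i' - i)))`, twice a unit, so they turn the pair into a
horizontal one when `j' - j` is even; otherwise applying `σ_{(t i', 0)}` first makes it even. -/

namespace YBSolution

variable {X : Type*}

def ofSigma (σ : X → Equiv.Perm X) (p : X × X) : X × X :=
  (σ p.1 p.2, (σ (σ p.1 p.2)).symm p.1)

variable {σ : X → Equiv.Perm X}

theorem ofSigma_involutive : Involutive (ofSigma σ) := by
  intro p
  simp [ofSigma]

theorem eq_ofSigma {r : X × X → X × X}
    (hr : ∀ x y, (r (x, y)).1 = σ x y ∧ σ (σ x y) (r (x, y)).2 = x) : r = ofSigma σ := by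
  funext ⟨x, y⟩
  exact Prod.ext (hr x y).1 ((Equiv.symm_apply_eq _).mpr (hr x y).2.symm).symm

theorem mem_permGroup_ofSigma (x : X) : σ x ∈ permGroup (ofSigma σ) :=
  Subgroup.subset_closure ⟨x, fun _ => rfl⟩

theorem isIrretractable_ofSigma (h : Injective σ) : IsIrretractable (ofSigma σ) :=
  fun _ _ hxy => h (Equiv.ext hxy)

structure IsCongruence (σ : X → Equiv.Perm X) (R : X → X → Prop) : Prop where
  equivalence : Equivalence R
  map_sigma {a a' b b'} : R a a' → R b b' → R (σ a b) (σ a' b')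
  map_sigma_symm {a a' b b'} : R a a' → R b b' → R ((σ a).symm b) ((σ a').symm b')

theorem isCongruence_ker {Y : Type*} {s : Y × Y → Y × Y} (hs : IsYBSolution s) {f : X → Y}
    (hf : IsSolHom (ofSigma σ) s f) : IsCongruence σ (fun a b => f a = f b) := by
  have hf' (a b : X) : f (σ a b) = (s (f a, f b)).1 := hf a b
  refine ⟨⟨fun _ => rfl, Eq.symm, Eq.trans⟩, fun {a a' b b'} ha hb => ?_,
    fun {a a' b b'} ha hb => (hs.sigma_bij (f a)).1 ?_⟩
  · rw [hf', hf', ha, hb]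
  · simp only
    rw [← hf', ha, ← hf', Equiv.apply_symm_apply, Equiv.apply_symm_apply, hb]

theorem isSimpleSolution_ofSigma {X : Type u} [Nontrivial X] {σ : X → Equiv.Perm X}
    (h : ∀ R, IsCongruence σ R → ∀ x x', x ≠ x' → R x x' → ∀ y z, R y z) :
    IsSimpleSolution (ofSigma σ) := by
  refine ⟨‹_›, fun Y s hs f hsurj hf => ?_⟩
  by_cases hinj : Injective f
  · exact Or.inl ⟨hinj, hsurj⟩
  obtain ⟨x, x', hfx, hne⟩ := not_injective_iff.mp hinj
  refine Or.inr ⟨fun y z => ?_⟩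
  obtain ⟨a, rfl⟩ := hsurj y
  obtain ⟨b, rfl⟩ := hsurj z
  exact h _ (isCongruence_ker hs hf) x x' hne hfx a b

end YBSolution

open YBSolution

namespace ZMod

variable {n : ℕ} [NeZero n]

theorem add_mul_induction {P : ZMod n → Prop} {d u : ZMod n} (hd : P d)
    (hu : ∀ e, P e → P (e + u)) (x : ZMod n) : P (d + x * u) := by
  have key (N : ℕ) : P (d + N * u) := by
    induction N with
    | zero => simpa using hd
    | succ N ih => simpa [add_mul, add_assoc] using hu _ ih
  simpa using key x.val

theorem even_or_even_add_of_isUnit (x : ZMod n) {u : ZMod n} (hu : IsUnit u) :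
    Even x ∨ Even (x + u) := by
  have parity (y : ZMod n) : Even y ∨ Odd y := by
    rw [← natCast_zmod_val y]
    exact (Nat.even_or_odd y.val).imp Even.natCast Odd.natCast
  refine (parity x).imp_right fun hx => ?_
  rcases parity u with ⟨r, hr⟩ | hu'
  · exact ⟨(x + u) * ↑hu.unit⁻¹ * r, by
      linear_combination ((x + u) * ↑hu.unit⁻¹) * hr - (x + u) * hu.val_inv_mul⟩
  · exact hx.add_odd hu'

end ZMod

theorem exists_apply_add_ne_of_isUnit {A : Type*} [Ring A] [Nontrivial A] {J : A → A}
    (hstep : ∀ i ≠ 0, ∃ k, IsUnit (J (i + k) - J k)) (d : A) (hd : d ≠ 0) :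
    ∃ w, J (w + d) ≠ J w :=
  let ⟨k, hk⟩ := hstep d hd
  ⟨k, by rw [add_comm]; exact sub_ne_zero.mp hk.ne_zero⟩

section JSigma

variable {A : Type*} [CommRing A] (t : Aˣ) (J : A → A)

def jSigma (x : A × A) : Equiv.Perm (A × A) where
  toFun y := (t * y.1 + x.2, t * (y.2 - J (t * y.1 + x.2 - x.1)))
  invFun y := (↑t⁻¹ * (y.1 - x.2), ↑t⁻¹ * y.2 + J (y.1 - x.1))
  left_inv y := by simp
  right_inv y := by simp

theorem jSigma_apply (i j k l : A) :
    jSigma t J (i, j) (k, l) = (t * k + j, t * (l - J (t * k + j - i))) := rfl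

theorem jSigma_symm_apply (i j a b : A) :
    (jSigma t J (i, j)).symm (a, b) = (↑t⁻¹ * (a - j), ↑t⁻¹ * b + J (a - i)) := rfl

theorem jSigma_symm_jSigma (p p' a b : A) :
    (jSigma t J (p', 0)).symm (jSigma t J (p, 0) (a, b)) =
      (a, b + (J (t * a - p') - J (t * a - p))) := by
  rw [jSigma_apply, jSigma_symm_apply, add_zero, sub_zero, Units.inv_mul_cancel_left,
    Units.inv_mul_cancel_left]
  congr 1
  ring

variable {t J}

theorem jSigma_injective (hsep : ∀ d ≠ 0, ∃ w, J (w + d) ≠ J w) : Injective (jSigma t J) := by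
  rintro ⟨i, j⟩ ⟨i', j'⟩ h
  have hj : j = j' := by simpa [jSigma_apply] using congr(($h (0, 0)).1)
  subst hj
  by_contra hne
  obtain ⟨w, hw⟩ := hsep (i - i') (sub_ne_zero.mpr fun h => hne (by rw [h]))
  have := congr(($h (↑t⁻¹ * (w + i - j), 0)).2)
  simp only [jSigma_apply, Units.mul_inv_cancel_left, zero_sub, mul_neg, neg_inj,
    Units.mul_right_inj] at this
  rw [show w + i - j + j - i = w by ring, show w + i - j + j - i' = w + (i - i') by ring] at this
  exact hw this.symm

theorem ofSigma_jSigma (hsym : ∀ a, J (-a) = J a) (i j k l : A) :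
    ofSigma (jSigma t J) ((i, j), (k, l)) =
      ((t * k + j, t * (l - J (t * k + j - i))),
        (↑t⁻¹ * i - l + J (t * k + j - i), ↑t⁻¹ * j + J (t * k + j - i))) := by
  simp only [ofSigma, jSigma_apply, jSigma_symm_apply]
  rw [show i - (t * k + j) = -(t * k + j - i) by ring, hsym]
  refine Prod.ext rfl (Prod.ext ?_ rfl)
  linear_combination (J (t * k + j - i) - l) * t.inv_mul

theorem bijective_ofSigma_jSigma_snd (hsym : ∀ a, J (-a) = J a) (y : A × A) :
    Bijective fun x => (ofSigma (jSigma t J) (x, y)).2 := by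
  obtain ⟨k, l⟩ := y
  refine bijective_iff_has_inverse.mpr
    ⟨fun z => (t * (z.1 - J (t * (k - z.1 + z.2 - l)) + l),
      t * (z.2 - J (t * (k - z.1 + z.2 - l)))), fun ⟨i, j⟩ => ?_, fun ⟨P, Q⟩ => ?_⟩
  · simp only [ofSigma_jSigma hsym]
    rw [show t * (k - (↑t⁻¹ * i - l + J (t * k + j - i)) + (↑t⁻¹ * j + J (t * k + j - i)) - l)
      = t * k + j - i by linear_combination (j - i) * t.mul_inv]
    ext
    · linear_combination i * t.mul_inv
    · linear_combination j * t.mul_inv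
  · simp only [ofSigma_jSigma hsym]
    rw [show t * k + t * (Q - J (t * (k - P + Q - l))) - t * (P - J (t * (k - P + Q - l)) + l)
      = t * (k - P + Q - l) by ring]
    ext
    · linear_combination (P - J (t * (k - P + Q - l)) + l) * t.inv_mul
    · linear_combination (Q - J (t * (k - P + Q - l))) * t.inv_mul

theorem braid_ofSigma_jSigma (hsym : ∀ a, J (-a) = J a)
    (hJt : ∀ a, J (t * a) = t * J a - (t - 1) * J 0) :
    yb12 (ofSigma (jSigma t J)) ∘ yb23 (ofSigma (jSigma t J)) ∘ yb12 (ofSigma (jSigma t J)) =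
      yb23 (ofSigma (jSigma t J)) ∘ yb12 (ofSigma (jSigma t J)) ∘ yb23 (ofSigma (jSigma t J)) := by
  funext ⟨⟨i, j⟩, ⟨k, l⟩, ⟨m, q⟩⟩
  have ht := t.mul_inv
  simp only [comp, yb12, yb23, ofSigma_jSigma hsym]
  -- normalise the arguments of `J`; those of the form `t * a` are then expanded by `hJt`
  rw [show t * m + (↑t⁻¹ * j + J (t * k + j - i)) - (↑t⁻¹ * i - l + J (t * k + j - i))
      = t * m + l + ↑t⁻¹ * j - ↑t⁻¹ * i by ring,
    show t * (t * m + (↑t⁻¹ * j + J (t * k + j - i))) + t * (l - J (t * k + j - i)) - (t * k + j)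
      = t * (t * m + l - k) by linear_combination j * ht,
    show t * (t * m + l) + j - i = t * (t * m + l + ↑t⁻¹ * j - ↑t⁻¹ * i) by
      linear_combination (i - j) * ht,
    show t * (↑t⁻¹ * k - q + J (t * m + l - k))
        + (↑t⁻¹ * j + J (t * (t * m + l + ↑t⁻¹ * j - ↑t⁻¹ * i)))
        - (↑t⁻¹ * i - t * (q - J (t * m + l - k)) + J (t * (t * m + l + ↑t⁻¹ * j - ↑t⁻¹ * i)))
      = k + ↑t⁻¹ * j - ↑t⁻¹ * i by linear_combination k * ht,
    show t * k + j - i = t * (k + ↑t⁻¹ * j - ↑t⁻¹ * i) by linear_combination (i - j) * ht,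
    hJt (k + ↑t⁻¹ * j - ↑t⁻¹ * i), hJt (t * m + l + ↑t⁻¹ * j - ↑t⁻¹ * i), hJt (t * m + l - k)]
  ext
  · linear_combination j * ht
  · ring
  · ring
  · linear_combination (-(t * J (k + ↑t⁻¹ * j - ↑t⁻¹ * i)) + (↑t - 1) * J 0) * ht
  · linear_combination (J (k + ↑t⁻¹ * j - ↑t⁻¹ * i) + q - J (t * m + l + ↑t⁻¹ * j - ↑t⁻¹ * i)
      - J (t * m + l - k)) * ht
  · linear_combination
      (J (k + ↑t⁻¹ * j - ↑t⁻¹ * i) - J (t * m + l + ↑t⁻¹ * j - ↑t⁻¹ * i)) * ht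

end JSigma

theorem isIndecomposable_ofSigma_jSigma {n : ℕ} [NeZero n] {t : (ZMod n)ˣ} {J : ZMod n → ZMod n}
    (hstep : ∃ k, IsUnit (J (1 + k) - J k)) : IsIndecomposable (ofSigma (jSigma t J)) := by
  obtain ⟨k, hk⟩ := hstep
  set G := permGroup (ofSigma (jSigma t J))
  have hshear (a b : ZMod n) : ∃ g ∈ G, g (a, b) = (a, b + (J (1 + k) - J k)) := by
    refine ⟨(jSigma t J (t * a - (1 + k), 0))⁻¹ * jSigma t J (t * a - k, 0),
      mul_mem (inv_mem (mem_permGroup_ofSigma _)) (mem_permGroup_ofSigma _), ?_⟩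
    rw [Equiv.Perm.mul_apply, Equiv.Perm.inv_def, jSigma_symm_jSigma, sub_sub_cancel,
      sub_sub_cancel]
  have hcol (a b e : ZMod n) : ∃ g ∈ G, g (a, b) = (a, e) := by
    have := ZMod.add_mul_induction (P := fun e => ∃ g ∈ G, g (a, b) = (a, e))
      ⟨1, one_mem _, rfl⟩
      (fun e ⟨g, hg, hge⟩ =>
        let ⟨g', hg', hge'⟩ := hshear a e
        ⟨g' * g, mul_mem hg' hg, by rw [Equiv.Perm.mul_apply, hge, hge']⟩)
      ((e - b) * ↑hk.unit⁻¹)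
    simpa [mul_assoc, hk.val_inv_mul] using this
  rintro ⟨a, b⟩ ⟨a', b'⟩
  obtain ⟨g, hg, hgb⟩ := hcol a b (↑t⁻¹ * b' + J a')
  refine ⟨jSigma t J (0, a' - t * a) * g, mul_mem (mem_permGroup_ofSigma _) hg, ?_⟩
  rw [Equiv.Perm.mul_apply, hgb, jSigma_apply]
  ext <;> simp

namespace YBSolution.IsCongruence

section CommRing

variable {A : Type*} [CommRing A] {t : Aˣ} {J : A → A} {R : A × A → A × A → Prop}
  (hR : IsCongruence (jSigma t J) R)
include hR

theorem rel_add_fst_of_rel_add_snd {u v c : A} (h : R (u, v) (u, v + c)) (p q : A) :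
    R (p, q) (p + ↑t⁻¹ * c, q) := by
  have := hR.map_sigma_symm (hR.equivalence.symm h)
    (hR.equivalence.refl (t * p + v + c, t * (q - J (t * p + v + c - u))))
  simp only [jSigma_symm_apply] at this
  convert this using 2
  · linear_combination -p * t.inv_mul
  · linear_combination -(q - J (t * p + v + c - u)) * t.inv_mul
  · linear_combination -p * t.inv_mul
  · linear_combination -(q - J (t * p + v + c - u)) * t.inv_mul

theorem rel_add_snd_of_forall_rel_add_fst {h : A} (H : ∀ p q, R (p, q) (p + h, q))
    (k a b : A) : R (a, b) (a, b + t * (J (h + k) - J k)) := by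
  have := hR.map_sigma (H (a - h - k) a) (hR.equivalence.refl (0, ↑t⁻¹ * b + J (h + k)))
  simp only [jSigma_apply, mul_zero, zero_add, show a - (a - h - k) = h + k by ring,
    show a - (a - h - k + h) = k by ring] at this
  convert this using 2
  · linear_combination -b * t.mul_inv
  · linear_combination -b * t.mul_inv

theorem exists_rel_add_snd_of_rel_same_snd (hsep : ∀ d ≠ 0, ∃ w, J (w + d) ≠ J w)
    {i i' b : A} (hne : i ≠ i') (h : R (i, b) (i', b)) :
    ∃ u v c, c ≠ 0 ∧ R (u, v) (u, v + c) := by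
  obtain ⟨w, hw⟩ := hsep (i - i') (sub_ne_zero.mpr hne)
  have := hR.map_sigma h (hR.equivalence.refl (↑t⁻¹ * (w + i - b), 0))
  simp only [jSigma_apply, Units.mul_inv_cancel_left, show w + i - b + b - i = w by ring,
    show w + i - b + b - i' = w + (i - i') by ring] at this
  refine ⟨_, _, t * (J w - J (w + (i - i'))), ?_, by convert this using 2; ring⟩
  exact (Units.mul_right_eq_zero t).not.mpr (sub_ne_zero.mpr hw.symm)

end CommRing

section ZMod

variable {n : ℕ} [NeZero n] {t : (ZMod n)ˣ} {J : ZMod n → ZMod n}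
  {R : ZMod n × ZMod n → ZMod n × ZMod n → Prop} (hR : IsCongruence (jSigma t J) R)
include hR

theorem total_of_rel_add_snd (hstep : ∀ i ≠ 0, ∃ k, IsUnit (J (i + k) - J k))
    {u v c : ZMod n} (hc : c ≠ 0) (h : R (u, v) (u, v + c)) (x y : ZMod n × ZMod n) : R x y := by
  obtain ⟨k, hk⟩ := hstep _ ((Units.mul_right_eq_zero t⁻¹).not.mpr hc)
  have hunit : IsUnit (t * (J (↑t⁻¹ * c + k) - J k)) := t.isUnit.mul hk
  have hcol (a b d : ZMod n) : R (a, b) (a, b + d) := by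
    have := ZMod.add_mul_induction (P := fun e => R (a, b) (a, e)) (hR.equivalence.refl _)
      (fun e he => hR.equivalence.trans he
        (hR.rel_add_snd_of_forall_rel_add_fst (hR.rel_add_fst_of_rel_add_snd h) k a e))
      (d * ↑hunit.unit⁻¹)
    simpa [mul_assoc, hunit.val_inv_mul] using this
  obtain ⟨p, q⟩ := x
  obtain ⟨p', q'⟩ := y
  have hrow := hR.rel_add_fst_of_rel_add_snd (hcol p q (t * (p' - p))) p q
  rw [Units.inv_mul_cancel_left, add_sub_cancel] at hrow
  simpa using hR.equivalence.trans hrow (hcol p' q (q' - q))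

theorem total_of_rel_same_snd [Nontrivial (ZMod n)]
    (hstep : ∀ i ≠ 0, ∃ k, IsUnit (J (i + k) - J k)) {i i' b : ZMod n} (hne : i ≠ i')
    (h : R (i, b) (i', b)) (x y : ZMod n × ZMod n) : R x y := by
  obtain ⟨u, v, c, hc, huv⟩ :=
    hR.exists_rel_add_snd_of_rel_same_snd (exists_apply_add_ne_of_isUnit hstep) hne h
  exact hR.total_of_rel_add_snd hstep hc huv x y

theorem exists_rel_same_snd_of_even (hsym : ∀ a, J (-a) = J a)
    (hi : ∀ i ≠ 0, IsUnit (J 0 - J i)) {i i' j j' : ZMod n} (hne : i ≠ i')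
    (h : R (i, j) (i', j')) (heven : Even (j' - j)) : ∃ b, R (i, b) (i', b) := by
  have hμ : IsUnit (J 0 - J (t * (i' - i))) :=
    hi _ ((Units.mul_right_eq_zero t).not.mpr (sub_ne_zero.mpr hne.symm))
  have hshift (e : ZMod n) (he : ∃ b, R (i, b) (i', b + e)) :
      ∃ b, R (i, b) (i', b + (e + 2 * (J 0 - J (t * (i' - i))))) := by
    obtain ⟨b, hb⟩ := he
    have := hR.map_sigma_symm (hR.equivalence.refl (t * i', 0))
      (hR.map_sigma (hR.equivalence.refl (t * i, 0)) hb)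
    rw [jSigma_symm_jSigma, jSigma_symm_jSigma, sub_self, sub_self, ← mul_sub, ← mul_sub,
      show t * (i - i') = -(t * (i' - i)) by ring, hsym] at this
    exact ⟨_, by convert this using 2; ring⟩
  obtain ⟨s, hs⟩ := heven
  have := ZMod.add_mul_induction (P := fun e => ∃ b, R (i, b) (i', b + e))
    ⟨j, by rwa [add_sub_cancel]⟩ hshift (-s * ↑hμ.unit⁻¹)
  rw [hs, show s + s + -s * ↑hμ.unit⁻¹ * (2 * (J 0 - J (t * (i' - i)))) = 0 by
    linear_combination (-2 * s) * hμ.val_inv_mul] at this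
  simpa using this

theorem total_of_rel_of_ne [Nontrivial (ZMod n)] (hsym : ∀ a, J (-a) = J a)
    (hi : ∀ i ≠ 0, IsUnit (J 0 - J i)) (hstep : ∀ i ≠ 0, ∃ k, IsUnit (J (i + k) - J k))
    {x x' : ZMod n × ZMod n} (hne : x ≠ x') (h : R x x') (y z : ZMod n × ZMod n) : R y z := by
  obtain ⟨i, j⟩ := x
  obtain ⟨i', j'⟩ := x'
  by_cases hi' : i = i'
  · subst hi'
    have hj : j' - j ≠ 0 := sub_ne_zero.mpr fun hj => hne (by rw [hj])
    exact hR.total_of_rel_add_snd hstep hj (by rwa [add_sub_cancel]) y z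
  have hti : (t : ZMod n) * (i' - i) ≠ 0 :=
    (Units.mul_right_eq_zero t).not.mpr (sub_ne_zero.mpr (Ne.symm hi'))
  rcases ZMod.even_or_even_add_of_isUnit (j' - j) (hi _ hti).neg with heven | heven
  · obtain ⟨b, hb⟩ := hR.exists_rel_same_snd_of_even hsym hi hi' h heven
    exact hR.total_of_rel_same_snd hstep hi' hb y z
  · have hti' : (t : ZMod n) * i ≠ t * i' := by simpa using hi'
    have h' := hR.map_sigma (hR.equivalence.refl (t * i', 0)) h
    simp only [jSigma_apply, add_zero, sub_self] at h'
    obtain ⟨b, hb⟩ := hR.exists_rel_same_snd_of_even hsym hi hti' h' (by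
      rw [← mul_sub, show t * i - t * i' = -(t * (i' - i)) by ring, hsym]
      convert heven.mul_left (t : ZMod n) using 1
      ring)
    exact hR.total_of_rel_same_snd hstep hti' hb y z

end ZMod

end YBSolution.IsCongruence

/-- the solutions of cardinality `n²` of Theorem `newexample2`:
`σ_{(i,j)}(k,l) = (tk + j, t(l − j_{tk+j−i}))` give indecomposable irretractable
solutions, which are simple under the extra invertibility hypotheses. -/
theorem simple_solution_n_squared (n : ℕ) (hn : 1 < n)
    (t : (ZMod n)ˣ) (J : ZMod n → ZMod n)
    (hsym : ∀ i : ZMod n, J (-i) = J i)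
    (hpow : ∀ (s : ℤ) (i : ZMod n),
      J ((t ^ s : (ZMod n)ˣ) * i) =
        (t ^ s : (ZMod n)ˣ) * J i - ((t ^ s : (ZMod n)ˣ) - 1) * J 0)
    (hstep : ∀ i : ZMod n, i ≠ 0 → ∃ k : ZMod n, IsUnit (J (i + k) - J k))
    (σ : ZMod n × ZMod n → ZMod n × ZMod n → ZMod n × ZMod n)
    (hσ : ∀ i j k l : ZMod n,
      σ (i, j) (k, l) = ((t : ZMod n) * k + j,
        (t : ZMod n) * (l - J ((t : ZMod n) * k + j - i))))
    (r : (ZMod n × ZMod n) × (ZMod n × ZMod n) → (ZMod n × ZMod n) × (ZMod n × ZMod n))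
    (hr : ∀ x y : ZMod n × ZMod n,
      (r (x, y)).1 = σ x y ∧ σ (σ x y) ((r (x, y)).2) = x) :
    (IsYBSolution r ∧ IsIndecomposable r ∧ IsIrretractable r) ∧
    ((∀ i : ZMod n, i ≠ 0 → IsUnit (J 0 - J i)) →
     (∀ i k : ZMod n, J i ≠ J k → IsUnit (J i - J k)) →
     IsSimpleSolution r) := by
  have : Fact (1 < n) := ⟨hn⟩
  have hσ' : σ = fun x => ⇑(jSigma t J x) := funext fun ⟨i, j⟩ => funext fun ⟨k, l⟩ => hσ i j k l
  subst hσ'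
  obtain rfl := eq_ofSigma hr
  have hJt : ∀ a, J (t * a) = t * J a - (t - 1) * J 0 := by simpa using hpow 1
  refine ⟨⟨⟨ofSigma_involutive, fun x => (jSigma t J x).bijective,
    bijective_ofSigma_jSigma_snd hsym, braid_ofSigma_jSigma hsym hJt⟩,
    isIndecomposable_ofSigma_jSigma (hstep 1 one_ne_zero),
    isIrretractable_ofSigma (jSigma_injective (exists_apply_add_ne_of_isUnit hstep))⟩,
    fun hi _ => isSimpleSolution_ofSigma fun R hR _ _ hne h =>
      hR.total_of_rel_of_ne hsym hi hstep hne h⟩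
end

section
/- Let n > 1 be an integer and let j₀,…,j_{n−1} ∈ ℤ/(n) (indices read modulo n) satisfy j_i = j_{−i} for all i ∈ ℤ/(n). Suppose that for every nonzero i ∈ ℤ/(n) there exists k ∈ ℤ/(n) such that j_{i+k} ≠ j_k, and that the subgroup of (ℤ/(n),+) generated by {j_i : i ∈ ℤ/(n)} is all of ℤ/(n). Define r : (ℤ/(n))² × (ℤ/(n))² → (ℤ/(n))² × (ℤ/(n))² by r((i,j),(k,l)) = (σ_{(i,j)}(k,l), σ_{σ_{(i,j)}(k,l)}⁻¹(i,j)), where σ_{(i,j)}(k,l) = (k + j, l − j_{k+j−i}). Then ((ℤ/(n))², r) is an indecomposable and irretractable solution of the YBE. If, moreover, j₀ − j_i is invertible in ℤ/(n) for every nonzero i ∈ ℤ/(n), then ((ℤ/(n))², r) is a simple solution of the YBE. -/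
open Function

/-!
Writing `σ_x` for the permutation `sigmaJ J x`, `r` is the solution
`r (x, y) = (σ_x y, σ_{σ_x y}⁻¹ x)` attached to the family `σ`, which is involutive for any
family of permutations; the braid relation and the bijectivity of the `γ_y` are direct
computations, where `J (-i) = J i` enters.

Indecomposability: `σ_{(a - u, 0)}⁻¹` translates the column `{a} × ℤ/(n)` by `J u`, and these
translations generate `ℤ/(n)`; `σ_{(0, b)}` moves columns. Irretractability:
`σ_{(i, j)} = σ_{(i', j)}` makes `i' - i` a period of `J`.

Simplicity: if a homomorphism `f` identifies `x ≠ x'`, then `σ_{x'}⁻¹ σ_x` preserves the fibres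
of `f`, and so does its commutator with `σ_{(p, 0)}` (the fibres of `f` form a congruence). One
of these translates some column by `± (J 0 - J i)` with `i ≠ 0`, a unit, so `f` is constant on
that column; `σ_{(0, b)}` carries this to every column, and `f (0, 0) = f (0, b)` identifies the
columns.
-/

open Equiv

section PermFamily

variable {X : Type*} (σ : X → Perm X)

def solOfPerms (p : X × X) : X × X :=
  (σ p.1 p.2, (σ (σ p.1 p.2))⁻¹ p.1)

@[simp]
lemma solOfPerms_fst (x y : X) : (solOfPerms σ (x, y)).1 = σ x y := rfl

lemma solOfPerms_solOfPerms (p : X × X) : solOfPerms σ (solOfPerms σ p) = p := by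
  simp [solOfPerms]

lemma mem_permGroup_solOfPerms (x : X) : σ x ∈ permGroup (solOfPerms σ) :=
  Subgroup.subset_closure ⟨x, fun _ => rfl⟩

lemma isIrretractable_solOfPerms (hσ : Injective σ) : IsIrretractable (solOfPerms σ) :=
  fun _ _ h => hσ (Equiv.ext h)

lemma eq_solOfPerms {r : X × X → X × X}
    (hr : ∀ x y, (r (x, y)).1 = σ x y ∧ σ (σ x y) (r (x, y)).2 = x) : r = solOfPerms σ := by
  funext ⟨x, y⟩
  exact Prod.ext (hr x y).1 (Perm.eq_inv_iff_eq.mpr (hr x y).2)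

end PermFamily

def fibrePerms {X Y : Type*} (f : X → Y) : Subgroup (Perm X) where
  carrier := {g | ∀ y, f (g y) = f y}
  mul_mem' hg hh y := (hg _).trans (hh y)
  one_mem' _ := rfl
  inv_mem' {g} hg y := by rw [← hg (g⁻¹ y), Perm.coe_inv, apply_symm_apply]

namespace IsSolHom

variable {X Y : Type*} {r : X × X → X × X} {s : Y × Y → Y × Y} {f : X → Y}

lemma map_fst_congr (hf : IsSolHom r s f) {x x' y y' : X} (hx : f x = f x') (hy : f y = f y') :
    f (r (x, y)).1 = f (r (x', y')).1 := by
  rw [hf, hf, hx, hy]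

lemma eq_of_map_fst_eq (hf : IsSolHom r s f) (hs : IsYBSolution s) {x y y' : X}
    (h : f (r (x, y)).1 = f (r (x, y')).1) : f y = f y' :=
  (hs.sigma_bij (f x)).injective (by rwa [hf, hf] at h)

lemma map_perm_apply_eq_iff (hf : IsSolHom r s f) (hs : IsYBSolution s) {g : Perm X}
    (hg : g ∈ permGroup r) (y y' : X) : f (g y) = f (g y') ↔ f y = f y' := by
  induction hg using Subgroup.closure_induction generalizing y y' with
  | mem g hg =>
    obtain ⟨x, hx⟩ := hg
    rw [hx, hx]
    exact ⟨hf.eq_of_map_fst_eq hs, hf.map_fst_congr rfl⟩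
  | one => rfl
  | mul g h _ _ ihg ihh => rw [Perm.mul_apply, Perm.mul_apply, ihg, ihh]
  | inv g _ ihg => rw [← ihg, Perm.coe_inv, apply_symm_apply, apply_symm_apply]

lemma conj_mem_fibrePerms (hf : IsSolHom r s f) (hs : IsYBSolution s) {g τ : Perm X}
    (hg : g ∈ permGroup r) (hτ : τ ∈ fibrePerms f) : g * τ * g⁻¹ ∈ fibrePerms f := fun y => by
  simpa using (hf.map_perm_apply_eq_iff hs hg _ _).mpr (hτ (g⁻¹ y))

lemma inv_mul_mem_fibrePerms {σ : X → Perm X} (hf : IsSolHom (solOfPerms σ) s f)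
    (hs : IsYBSolution s) {x x' : X} (hx : f x = f x') :
    (σ x')⁻¹ * σ x ∈ fibrePerms f := fun y => by
  rw [Perm.mul_apply, ← hf.map_perm_apply_eq_iff hs (mem_permGroup_solOfPerms σ x'),
    Perm.coe_inv, apply_symm_apply]
  exact hf.map_fst_congr hx rfl

end IsSolHom

lemma ZMod.periodic_apply_eq_of_isUnit {n : ℕ} {α : Type*} {g : ZMod n → α} {c : ZMod n}
    (hg : Periodic g c) (hc : IsUnit c) (a b : ZMod n) : g a = g b := by
  obtain ⟨u, rfl⟩ := hc
  have h := hg.int_mul (ZMod.cast ((a - b) * ((u⁻¹ : (ZMod n)ˣ) : ZMod n))) b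
  rwa [ZMod.intCast_zmod_cast, mul_assoc, Units.inv_mul, mul_one, add_sub_cancel] at h

def columnShifts {A B : Type*} [AddGroup B] (G : Subgroup (Perm (A × B))) (a : A) :
    AddSubgroup B where
  carrier := {c | ∃ g ∈ G, ∀ b, g (a, b) = (a, b + c)}
  zero_mem' := ⟨1, G.one_mem, fun b => by simp⟩
  add_mem' := by
    rintro c d ⟨g, hg, hgc⟩ ⟨h, hh, hhd⟩
    exact ⟨h * g, G.mul_mem hh hg, fun b => by rw [Perm.mul_apply, hgc, hhd, add_assoc]⟩
  neg_mem' := by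
    rintro c ⟨g, hg, hgc⟩
    exact ⟨g⁻¹, G.inv_mem hg, fun b => by rw [Perm.inv_eq_iff_eq, hgc, neg_add_cancel_right]⟩

section SigmaJ

variable {n : ℕ} (J : ZMod n → ZMod n)

def sigmaJ (x : ZMod n × ZMod n) : Perm (ZMod n × ZMod n) where
  toFun y := (y.1 + x.2, y.2 - J (y.1 + x.2 - x.1))
  invFun y := (y.1 - x.2, y.2 + J (y.1 - x.1))
  left_inv y := by simp
  right_inv y := by simp

@[simp]
lemma sigmaJ_apply (i j k l : ZMod n) :
    sigmaJ J (i, j) (k, l) = (k + j, l - J (k + j - i)) := rfl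

@[simp]
lemma sigmaJ_symm_apply (i j k l : ZMod n) :
    (sigmaJ J (i, j)).symm (k, l) = (k - j, l + J (k - i)) := rfl

lemma solOfPerms_sigmaJ_apply (hsym : ∀ i, J (-i) = J i) (i j k l : ZMod n) :
    solOfPerms (sigmaJ J) ((i, j), (k, l)) =
      ((k + j, l - J (k + j - i)), (i - l + J (k + j - i), j + J (k + j - i))) := by
  simp only [solOfPerms, sigmaJ_apply, Perm.coe_inv, sigmaJ_symm_apply, Prod.mk.injEq,
    add_right_inj, true_and]
  constructor
  · ring
  · rw [← hsym, neg_sub]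

lemma isYBSolution_sigmaJ (hsym : ∀ i, J (-i) = J i) : IsYBSolution (solOfPerms (sigmaJ J)) where
  invol := solOfPerms_solOfPerms _
  sigma_bij x := (sigmaJ J x).bijective
  gamma_bij := by
    rintro ⟨k, l⟩
    refine bijective_iff_has_inverse.mpr
      ⟨fun w => (w.1 + l - J (k + w.2 - w.1 - l), w.2 - J (k + w.2 - w.1 - l)), ?_, ?_⟩
    all_goals
      rintro ⟨i, j⟩
      simp only [solOfPerms_sigmaJ_apply J hsym]
      ring_nf
  braid := by
    funext ⟨⟨i, j⟩, ⟨k, l⟩, ⟨m, w⟩⟩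
    simp only [comp_apply, yb12, yb23, solOfPerms_sigmaJ_apply J hsym, Prod.mk.injEq]
    refine ⟨⟨?_, ?_⟩, ⟨?_, ?_⟩, ?_, ?_⟩ <;> ring_nf

lemma columnShifts_sigmaJ_eq_top (hgen : AddSubgroup.closure (Set.range J) = ⊤) (a : ZMod n) :
    columnShifts (permGroup (solOfPerms (sigmaJ J))) a = ⊤ := by
  rw [eq_top_iff, ← hgen, AddSubgroup.closure_le]
  rintro _ ⟨u, rfl⟩
  exact ⟨(sigmaJ J (a - u, 0))⁻¹, inv_mem (mem_permGroup_solOfPerms _ _), fun l => by simp⟩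

lemma isIndecomposable_sigmaJ (hgen : AddSubgroup.closure (Set.range J) = ⊤) :
    IsIndecomposable (solOfPerms (sigmaJ J)) := by
  rintro ⟨p, q⟩ ⟨a, b⟩
  obtain ⟨g, hg, hgc⟩ : b - (q - J a) ∈ columnShifts (permGroup (solOfPerms (sigmaJ J))) a := by
    rw [columnShifts_sigmaJ_eq_top J hgen]
    trivial
  refine ⟨g * sigmaJ J (0, a - p), mul_mem hg (mem_permGroup_solOfPerms _ _), ?_⟩
  rw [Perm.mul_apply, sigmaJ_apply, add_sub_cancel, sub_zero, hgc, add_sub_cancel]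

lemma sigmaJ_injective (hstep : ∀ i, i ≠ 0 → ∃ k, J (i + k) ≠ J k) : Injective (sigmaJ J) := by
  rintro ⟨i, j⟩ ⟨i', j'⟩ h
  obtain rfl : j = j' := by simpa using congr_arg Prod.fst (DFunLike.congr_fun h (0, 0))
  by_contra hne
  obtain ⟨k, hk⟩ := hstep (i' - i) (sub_ne_zero.mpr fun h => hne (h ▸ rfl))
  apply hk
  have := congr_arg Prod.snd (DFunLike.congr_fun h (k + i' - j, 0))
  simp only [sigmaJ_apply, sub_add_cancel, add_sub_cancel_right, zero_sub, neg_inj] at this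
  convert this using 2
  ring

lemma exists_fibrePerms_column_shift
    (hunit : ∀ i, i ≠ 0 → IsUnit (J 0 - J i)) {Y : Type*} {s : Y × Y → Y × Y}
    {f : ZMod n × ZMod n → Y}
    (hf : IsSolHom (solOfPerms (sigmaJ J)) s f) (hs : IsYBSolution s) {x x' : ZMod n × ZMod n}
    (hne : x ≠ x') (hx : f x = f x') :
    ∃ g ∈ fibrePerms f, ∃ a c, IsUnit c ∧ ∀ l, g (a, l) = (a, l + c) := by
  obtain ⟨i, j⟩ := x
  obtain ⟨i', j'⟩ := x'
  have hτ := hf.inv_mul_mem_fibrePerms hs hx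
  rcases eq_or_ne j j' with rfl | hj
  · refine ⟨_, hτ, i - j, J (i - i') - J 0, ?_, fun l => ?_⟩
    · simpa using (hunit (i - i') (sub_ne_zero.mpr fun h => hne (h ▸ rfl))).neg
    · simp only [Perm.coe_mul, Perm.coe_inv, comp_apply, sigmaJ_apply, sub_add_cancel, sub_self,
        sigmaJ_symm_apply, Prod.mk.injEq, true_and]
      ring_nf
  · refine ⟨_, mul_mem (hf.conj_mem_fibrePerms hs (mem_permGroup_solOfPerms _ (j' - j, 0)) hτ)
      (inv_mem hτ), j' - j, J (j' - j) - J 0, ?_, fun l => ?_⟩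
    · simpa using (hunit (j' - j) (sub_ne_zero.mpr hj.symm)).neg
    · simp only [mul_inv_rev, inv_inv, Perm.coe_mul, Perm.coe_inv, comp_apply, sigmaJ_apply,
        sigmaJ_symm_apply, sub_zero, sub_sub_sub_cancel_right, add_sub_cancel_right, sub_add_cancel,
        add_zero, sub_self, Prod.mk.injEq, true_and]
      ring_nf

lemma IsSolHom.apply_eq_of_column_const {Y : Type*} {s : Y × Y → Y × Y} {f : ZMod n × ZMod n → Y}
    (hf : IsSolHom (solOfPerms (sigmaJ J)) s f) (hs : IsYBSolution s) {a : ZMod n}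
    (ha : ∀ l l', f (a, l) = f (a, l')) (z z' : ZMod n × ZMod n) : f z = f z' := by
  have hcol : ∀ b l l', f (b, l) = f (b, l') := by
    intro b l l'
    have := (hf.map_perm_apply_eq_iff hs (mem_permGroup_solOfPerms _ (0, b - a))
      (a, l + J b) (a, l' + J b)).mpr (ha _ _)
    simpa using this
  obtain ⟨k, l⟩ := z
  obtain ⟨k', l'⟩ := z'
  have := hf.map_fst_congr (hcol 0 0 (k' - k)) (rfl : f (k, l + J k) = _)
  simp only [solOfPerms_fst, sigmaJ_apply, add_zero, sub_zero, add_sub_cancel_right,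
    add_sub_cancel] at this
  rw [this]
  exact hcol _ _ _

lemma isSimpleSolution_sigmaJ (hn : 1 < n)
    (hunit : ∀ i, i ≠ 0 → IsUnit (J 0 - J i)) : IsSimpleSolution (solOfPerms (sigmaJ J)) := by
  have : Fact (1 < n) := ⟨hn⟩
  refine ⟨inferInstance, fun Y s hs f hsurj hf => ?_⟩
  by_cases hinj : Injective f
  · exact Or.inl ⟨hinj, hsurj⟩
  obtain ⟨x, x', hx, hne⟩ := not_injective_iff.mp hinj
  obtain ⟨g, hg, a, c, hc, hgc⟩ := exists_fibrePerms_column_shift J hunit hf hs hne hx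
  have hper : Periodic (fun l => f (a, l)) c := fun l => (congr_arg f (hgc l)).symm.trans (hg _)
  refine Or.inr ⟨fun y y' => ?_⟩
  obtain ⟨z, rfl⟩ := hsurj y
  obtain ⟨z', rfl⟩ := hsurj y'
  exact hf.apply_eq_of_column_const J hs (ZMod.periodic_apply_eq_of_isUnit hper hc) z z'

end SigmaJ

/-- the `t = 1` version (Theorem `newexample2bis`):
`σ_{(i,j)}(k,l) = (k + j, l − j_{k+j−i})` gives an indecomposable irretractable
solution, which is simple when `j₀ − j_i` is invertible for all nonzero `i`. -/
theorem simple_solution_n_squared_t_one (n : ℕ) (hn : 1 < n)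
    (J : ZMod n → ZMod n)
    (hsym : ∀ i : ZMod n, J (-i) = J i)
    (hstep : ∀ i : ZMod n, i ≠ 0 → ∃ k : ZMod n, J (i + k) ≠ J k)
    (hgen : AddSubgroup.closure (Set.range J) = (⊤ : AddSubgroup (ZMod n)))
    (σ : ZMod n × ZMod n → ZMod n × ZMod n → ZMod n × ZMod n)
    (hσ : ∀ i j k l : ZMod n,
      σ (i, j) (k, l) = (k + j, l - J (k + j - i)))
    (r : (ZMod n × ZMod n) × (ZMod n × ZMod n) → (ZMod n × ZMod n) × (ZMod n × ZMod n))
    (hr : ∀ x y : ZMod n × ZMod n,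
      (r (x, y)).1 = σ x y ∧ σ (σ x y) ((r (x, y)).2) = x) :
    (IsYBSolution r ∧ IsIndecomposable r ∧ IsIrretractable r) ∧
    ((∀ i : ZMod n, i ≠ 0 → IsUnit (J 0 - J i)) → IsSimpleSolution r) := by
  have hσJ : ∀ x y, σ x y = sigmaJ J x y := fun ⟨i, j⟩ ⟨k, l⟩ => hσ i j k l
  obtain rfl : r = solOfPerms (sigmaJ J) :=
    eq_solOfPerms _ fun x y => by simpa only [hσJ] using hr x y
  exact ⟨⟨isYBSolution_sigmaJ J hsym, isIndecomposable_sigmaJ J hgen,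
    isIrretractable_solOfPerms _ (sigmaJ_injective J hstep)⟩, isSimpleSolution_sigmaJ J hn⟩
end

section
/- Let p be a prime number, let t ∈ ℤ/(p) be nonzero, and let j₀,…,j_{p−1} ∈ ℤ/(p) (indices read modulo p) satisfy j_i = j_{−i} for all i and j_{tˢi} = tˢ j_i − (tˢ − 1) j₀ for all i ∈ ℤ/(p) and all s ∈ ℤ. Suppose j_i ≠ j_k for some i ≠ k. Define r : (ℤ/(p))² × (ℤ/(p))² → (ℤ/(p))² × (ℤ/(p))² by r((i,j),(k,l)) = (σ_{(i,j)}(k,l), σ_{σ_{(i,j)}(k,l)}⁻¹(i,j)), where σ_{(i,j)}(k,l) = (tk + j, t(l − j_{tk+j−i})). Then ((ℤ/(p))², r) is a simple solution of the YBE. -/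
open Function

/-!
Writing `γ_x(y) = σ_{σ_x(y)}⁻¹(x)`, involutivity holds for any `j`, and with `j_{-a} = j_a` both
`σ` and `γ` take the normal forms `σ_{(i,j)}(k,l) = (tk + j, tl - t j_{i-j-tk})` and
`γ_{(i,j)}(k,l) = (t⁻¹i - l + j_{i-j-tk}, t⁻¹j + j_{i-j-tk})`; the braid relation then reduces to
the scaling rule `j_{ta} = t j_a - (t - 1) j_0`.

As for simplicity, the kernel of a homomorphism `f` is compatible with `σ` and `γ`. If `f` identifies
two points `(i,j) ≠ (i',j')`, then `σ_{(i',j')} σ_{(i,j)}⁻¹` is a map `(u,v) ↦ (u + ε, v + ψ u)`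
preserving the fibres of `f`. Conjugating it by `σ_{(w,0)}` for two values of `w` and comparing
gives a vertical translation `v ↦ v + c` of a column; `c ≠ 0` unless `j` is periodic (impossible,
as `j` is not constant) or `p = 2`. A column in one fibre is moved by the maps `σ_x` onto every
other column, so `f` is constant. The degenerate cases (`i = i'`, `j = j'`, `p = 2`) reduce to a
pair in one row, which again yields a column translation with nonzero step.
-/

theorem ZMod.eq_of_periodic {p : ℕ} [Fact p.Prime] {Y : Type*} {g : ZMod p → Y} {c : ZMod p}
    (hg : Periodic g c) (hc : c ≠ 0) (a b : ZMod p) : g a = g b := by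
  have hb : b = a + ((b - a) / c).val • c := by
    rw [nsmul_eq_mul, ZMod.natCast_zmod_val, div_mul_cancel₀ _ hc, add_sub_cancel]
  rw [hb, hg.nsmul _ a]

theorem ZMod.eq_of_two_eq_zero {p : ℕ} [Fact p.Prime] (h2 : (2 : ZMod p) = 0) {a b : ZMod p}
    (ha : a ≠ 0) (hb : b ≠ 0) : a = b := by
  have key : ∀ a b : ZMod 2, a ≠ 0 → b ≠ 0 → a = b := by decide
  obtain rfl : p = 2 := ((Nat.prime_dvd_prime_iff_eq Fact.out Nat.prime_two).mp
    ((ZMod.natCast_eq_zero_iff 2 p).mp (by exact_mod_cast h2)))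
  exact key a b ha hb

theorem ZMod.not_periodic_of_exists_ne {p : ℕ} [Fact p.Prime] {Y : Type*} {g : ZMod p → Y}
    (hg : ∃ a b, g a ≠ g b) {c : ZMod p} (hc : c ≠ 0) : ¬ Periodic g c := by
  obtain ⟨a, b, hab⟩ := hg
  exact fun h => hab (ZMod.eq_of_periodic h hc a b)

structure KerCompatible {X Y : Type*} (r : X × X → X × X) (f : X → Y) : Prop where
  fst : ∀ {x x' y y'}, f x = f x' → f y = f y' → f (r (x, y)).1 = f (r (x', y')).1
  snd : ∀ {x x' y y'}, f x = f x' → f y = f y' → f (r (x, y)).2 = f (r (x', y')).2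

namespace IsSolHom

variable {X Y : Type*} {r : X × X → X × X} {s : Y × Y → Y × Y} {f : X → Y}

theorem map_snd (hr : ∀ q, r (r q) = q) (hs : IsYBSolution s) (hf : IsSolHom r s f)
    (x y : X) : f (r (x, y)).2 = (s (f x, f y)).2 := by
  apply (hs.sigma_bij (s (f x, f y)).1).injective
  dsimp only
  rw [Prod.mk.eta, hs.invol, ← hf, ← hf, Prod.mk.eta, hr]

theorem kerCompatible (hr : ∀ q, r (r q) = q) (hs : IsYBSolution s) (hf : IsSolHom r s f) :
    KerCompatible r f where
  fst hx hy := by rw [hf, hf, hx, hy]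
  snd hx hy := by rw [hf.map_snd hr hs, hf.map_snd hr hs, hx, hy]

end IsSolHom

theorem IsYBSolution.of_components {X : Type*} (σ γ : X → X → X)
    (invol_fst : ∀ x y, σ (σ x y) (γ x y) = x) (invol_snd : ∀ x y, γ (σ x y) (γ x y) = y)
    (σ_bij : ∀ x, Bijective (σ x)) (γ_bij : ∀ y, Bijective (γ · y))
    (braid_fst : ∀ x y z, σ (σ x y) (σ (γ x y) z) = σ x (σ y z))
    (braid_mid : ∀ x y z, γ (σ x y) (σ (γ x y) z) = σ (γ x (σ y z)) (γ y z))
    (braid_snd : ∀ x y z, γ (γ x y) z = γ (γ x (σ y z)) (γ y z)) :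
    IsYBSolution (fun q : X × X => (σ q.1 q.2, γ q.1 q.2)) where
  invol q := by simp only [invol_fst, invol_snd]
  sigma_bij := σ_bij
  gamma_bij := γ_bij
  braid := by
    funext ⟨x, y, z⟩
    exact Prod.ext (braid_fst x y z) (Prod.ext (braid_mid x y z) (braid_snd x y z))

namespace PSquared

section Field

variable {K : Type*} [Field K]

def sigma (t : K) (J : K → K) (x y : K × K) : K × K :=
  (t * y.1 + x.2, t * (y.2 - J (t * y.1 + x.2 - x.1)))

def sigmaInv (t : K) (J : K → K) (x z : K × K) : K × K :=
  (t⁻¹ * (z.1 - x.2), t⁻¹ * z.2 + J (z.1 - x.1))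

def gamma (t : K) (J : K → K) (x y : K × K) : K × K :=
  sigmaInv t J (sigma t J x y) x

def gammaInv (t : K) (J : K → K) (y z : K × K) : K × K :=
  let d := t * (z.1 - z.2 + y.2)
  (d + t * (z.2 - J (d - t * y.1)), t * (z.2 - J (d - t * y.1)))

def solution (t : K) (J : K → K) (q : (K × K) × (K × K)) : (K × K) × (K × K) :=
  (sigma t J q.1 q.2, gamma t J q.1 q.2)

variable {t : K} {J : K → K}

theorem sigma_sigmaInv_apply (ht : t ≠ 0) (x x' : K × K) (u v : K) :
    sigma t J x' (sigmaInv t J x (u, v))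
      = (u + (x'.2 - x.2), v + t * (J (u - x.1) - J (u + (x'.2 - x.2) - x'.1))) := by
  simp only [sigma, sigmaInv, mul_inv_cancel_left₀ ht]
  rw [show u - x.2 + x'.2 - x'.1 = u + (x'.2 - x.2) - x'.1 by ring]
  exact Prod.ext (by ring) (by linear_combination v * mul_inv_cancel₀ ht)

theorem sigma_sigmaInv (ht : t ≠ 0) (x z : K × K) : sigma t J x (sigmaInv t J x z) = z := by
  simp [sigma_sigmaInv_apply ht]

theorem sigmaInv_sigma (ht : t ≠ 0) (x y : K × K) : sigmaInv t J x (sigma t J x y) = y := by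
  simp only [sigma, sigmaInv, add_sub_cancel_right, inv_mul_cancel_left₀ ht]
  exact Prod.ext rfl (by field_simp; ring)

theorem sigma_bijective (ht : t ≠ 0) (x : K × K) : Bijective (sigma t J x) :=
  ⟨LeftInverse.injective (sigmaInv_sigma ht x), RightInverse.surjective (sigma_sigmaInv ht x)⟩

theorem sigma_mk (hsym : ∀ a, J (-a) = J a) (i j k l : K) :
    sigma t J (i, j) (k, l) = (t * k + j, t * l - t * J (i - j - t * k)) := by
  rw [sigma, ← hsym, neg_sub, mul_sub]
  ring_nf

theorem gamma_mk (ht : t ≠ 0) (hsym : ∀ a, J (-a) = J a) (i j k l : K) :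
    gamma t J (i, j) (k, l)
      = (t⁻¹ * i - l + J (i - j - t * k), t⁻¹ * j + J (i - j - t * k)) := by
  rw [gamma, sigma_mk hsym, sigmaInv]
  refine Prod.ext ?_ ?_
  · field_simp
    ring
  · dsimp only
    ring_nf

theorem sigma_sigma_gamma (ht : t ≠ 0) (x y : K × K) :
    sigma t J (sigma t J x y) (gamma t J x y) = x :=
  sigma_sigmaInv ht _ _

theorem gamma_sigma_gamma (ht : t ≠ 0) (x y : K × K) :
    gamma t J (sigma t J x y) (gamma t J x y) = y := by
  rw [gamma, sigma_sigma_gamma ht, sigmaInv_sigma ht]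

theorem gamma_gammaInv (ht : t ≠ 0) (hsym : ∀ a, J (-a) = J a) (y z : K × K) :
    gamma t J (gammaInv t J y z) y = z := by
  obtain ⟨k, l⟩ := y
  simp only [gammaInv, gamma_mk ht hsym, add_sub_cancel_right]
  exact Prod.ext (by field_simp; ring) (by field_simp; ring)

theorem gammaInv_gamma (ht : t ≠ 0) (hsym : ∀ a, J (-a) = J a) (x y : K × K) :
    gammaInv t J y (gamma t J x y) = x := by
  obtain ⟨i, j⟩ := x
  obtain ⟨k, l⟩ := y
  have hd : t * (t⁻¹ * i - l + J (i - j - t * k) - (t⁻¹ * j + J (i - j - t * k)) + l) = i - j := by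
    field_simp
    ring
  simp only [gammaInv, gamma_mk ht hsym, hd]
  exact Prod.ext (by field_simp; ring) (by field_simp; ring)

theorem gamma_bijective (ht : t ≠ 0) (hsym : ∀ a, J (-a) = J a) (y : K × K) :
    Bijective (gamma t J · y) :=
  ⟨LeftInverse.injective (gammaInv_gamma ht hsym · y),
    RightInverse.surjective (gamma_gammaInv ht hsym y)⟩

theorem eq_solution (ht : t ≠ 0) {r : (K × K) × (K × K) → (K × K) × (K × K)}
    (hr : ∀ x y, (r (x, y)).1 = sigma t J x y ∧ sigma t J (sigma t J x y) (r (x, y)).2 = x) :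
    r = solution t J := by
  funext ⟨x, y⟩
  refine Prod.ext (hr x y).1 ((sigma_bijective (J := J) ht (sigma t J x y)).injective ?_)
  rw [(hr x y).2]
  exact (sigma_sigma_gamma ht x y).symm

theorem apply_inv_mul (ht : t ≠ 0) (hJt : ∀ a, J (t * a) = t * J a - (t - 1) * J 0) (a : K) :
    J (t⁻¹ * a) = t⁻¹ * J a - (t⁻¹ - 1) * J 0 := by
  have h := hJt (t⁻¹ * a)
  rw [mul_inv_cancel_left₀ ht] at h
  rw [h]
  field_simp
  ring

section Braid

variable (ht : t ≠ 0) (hsym : ∀ a, J (-a) = J a)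
  (hJt : ∀ a, J (t * a) = t * J a - (t - 1) * J 0)
include ht hsym

theorem gamma_sigma_mk (i j k l m n : K) :
    gamma t J (i, j) (sigma t J (k, l) (m, n))
      = (t⁻¹ * i - (t * n - t * J (k - l - t * m)) + J (i - j - t * l - t * (t * m)),
         t⁻¹ * j + J (i - j - t * l - t * (t * m))) := by
  rw [sigma_mk hsym, gamma_mk ht hsym,
    show i - j - t * (t * m + l) = i - j - t * l - t * (t * m) by ring]

include hJt

theorem sigma_gamma_mk (i j k l m n : K) :
    sigma t J (gamma t J (i, j) (k, l)) (m, n)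
      = (t * m + (t⁻¹ * j + J (i - j - t * k)),
         t * n - J (i - j - t * l - t * (t * m)) + (1 - t) * J 0) := by
  rw [gamma_mk ht hsym, sigma_mk hsym]
  congr 1
  rw [show t⁻¹ * i - l + J (i - j - t * k) - (t⁻¹ * j + J (i - j - t * k)) - t * m
        = t⁻¹ * (i - j - t * l - t * (t * m)) by field_simp; ring,
      apply_inv_mul ht hJt]
  field_simp
  ring

theorem braid_fst (x y z : K × K) :
    sigma t J (sigma t J x y) (sigma t J (gamma t J x y) z)
      = sigma t J x (sigma t J y z) := by
  obtain ⟨i, j⟩ := x; obtain ⟨k, l⟩ := y; obtain ⟨m, n⟩ := z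
  rw [sigma_gamma_mk ht hsym hJt]
  simp only [sigma_mk hsym]
  rw [show t * k + j - (t * l - t * J (i - j - t * k)) - t * (t * m + (t⁻¹ * j + J (i - j - t * k)))
        = t * (k - l - t * m) by field_simp; ring,
      hJt, show i - j - t * (t * m + l) = i - j - t * l - t * (t * m) by ring]
  congr 1
  · field_simp
    ring
  · ring

theorem braid_mid (x y z : K × K) :
    gamma t J (sigma t J x y) (sigma t J (gamma t J x y) z)
      = sigma t J (gamma t J x (sigma t J y z)) (gamma t J y z) := by
  obtain ⟨i, j⟩ := x; obtain ⟨k, l⟩ := y; obtain ⟨m, n⟩ := z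
  rw [sigma_gamma_mk ht hsym hJt, gamma_sigma_mk ht hsym]
  simp only [sigma_mk hsym, gamma_mk ht hsym]
  rw [show t * k + j - (t * l - t * J (i - j - t * k)) - t * (t * m + (t⁻¹ * j + J (i - j - t * k)))
        = t * (k - l - t * m) by field_simp; ring,
      hJt,
      show t⁻¹ * i - (t * n - t * J (k - l - t * m)) + J (i - j - t * l - t * (t * m))
          - (t⁻¹ * j + J (i - j - t * l - t * (t * m))) - t * (t⁻¹ * k - n + J (k - l - t * m))
        = t⁻¹ * (i - j - t * k) by field_simp; ring,
      apply_inv_mul ht hJt]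
  congr 1
  · ring
  · field_simp
    ring

theorem braid_snd (x y z : K × K) :
    gamma t J (gamma t J x y) z = gamma t J (gamma t J x (sigma t J y z)) (gamma t J y z) := by
  obtain ⟨i, j⟩ := x; obtain ⟨k, l⟩ := y; obtain ⟨m, n⟩ := z
  rw [gamma_sigma_mk ht hsym]
  simp only [gamma_mk ht hsym]
  rw [show t⁻¹ * i - l + J (i - j - t * k) - (t⁻¹ * j + J (i - j - t * k)) - t * m
        = t⁻¹ * (i - j - t * l - t * (t * m)) by field_simp; ring,
      show t⁻¹ * i - (t * n - t * J (k - l - t * m)) + J (i - j - t * l - t * (t * m))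
          - (t⁻¹ * j + J (i - j - t * l - t * (t * m))) - t * (t⁻¹ * k - n + J (k - l - t * m))
        = t⁻¹ * (i - j - t * k) by field_simp; ring,
      apply_inv_mul ht hJt, apply_inv_mul ht hJt]
  congr 1
  · field_simp
    ring
  · ring

theorem isYBSolution_solution : IsYBSolution (solution t J) :=
  IsYBSolution.of_components (sigma t J) (gamma t J) (sigma_sigma_gamma ht) (gamma_sigma_gamma ht)
    (sigma_bijective ht) (gamma_bijective ht hsym) (braid_fst ht hsym hJt)
    (braid_mid ht hsym hJt) (braid_snd ht hsym hJt)

end Braid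

end Field

section Simplicity

variable {p : ℕ} [Fact p.Prime] {t : ZMod p} {J : ZMod p → ZMod p} {Y : Type*}
  {f : ZMod p × ZMod p → Y}

variable (ht : t ≠ 0) (hf : KerCompatible (solution t J) f)
include ht hf

theorem const_of_column {u₀ : ZMod p} (hcol : ∀ v v', f (u₀, v) = f (u₀, v')) :
    ∀ z z', f z = f z' := by
  have fst_congr : ∀ z z' : ZMod p × ZMod p, z.1 = z'.1 → f z = f z' := by
    intro z z' h
    let x : ZMod p × ZMod p := (0, z.1 - t * u₀)
    have hx : ∀ w : ZMod p × ZMod p, w.1 = z.1 → sigmaInv t J x w = (u₀, (sigmaInv t J x w).2) :=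
      fun w hw => Prod.ext (by simp [sigmaInv, x, hw, ht]) rfl
    calc f z = f (sigma t J x (sigmaInv t J x z)) := by rw [sigma_sigmaInv ht]
      _ = f (sigma t J x (sigmaInv t J x z')) := by
        have hcol' : f (sigmaInv t J x z) = f (sigmaInv t J x z') := by
          rw [hx z rfl, hx z' h.symm]
          exact hcol _ _
        exact hf.fst rfl hcol'
      _ = f z' := by rw [sigma_sigmaInv ht]
  intro z z'
  let q : ZMod p × ZMod p := (t⁻¹ * z.1, 0)
  calc f z = f (sigma t J (0, 0) q) := fst_congr _ _ (by simp [sigma, q, ht])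
    _ = f (sigma t J (0, z'.1 - z.1) q) := hf.fst (fst_congr _ _ rfl) rfl
    _ = f z' := fst_congr _ _ (by simp [sigma, q, ht])

theorem const_of_column_periodic {u₀ c : ZMod p} (hc : c ≠ 0)
    (hper : ∀ v, f (u₀, v + c) = f (u₀, v)) : ∀ z z', f z = f z' :=
  const_of_column ht hf (ZMod.eq_of_periodic (g := fun v => f (u₀, v)) hper hc)

theorem apply_eq_apply_shift {i j i' j' : ZMod p} (h : f (i, j) = f (i', j')) (u v : ZMod p) :
    f (u, v) = f (u + (j' - j), v + t * (J (u - i) - J (u + (j' - j) - i'))) :=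
  calc f (u, v) = f (sigma t J (i, j) (sigmaInv t J (i, j) (u, v))) := by rw [sigma_sigmaInv ht]
    _ = f (sigma t J (i', j') (sigmaInv t J (i, j) (u, v))) := hf.fst h rfl
    _ = _ := by rw [sigma_sigmaInv_apply ht]

theorem const_of_eq_snd (hJ : ∃ a b, J a ≠ J b) {a a' b : ZMod p} (ha : a ≠ a')
    (h : f (a, b) = f (a', b)) : ∀ z z', f z = f z' := by
  have shift := apply_eq_apply_shift ht hf h
  simp only [sub_self, add_zero] at shift
  obtain ⟨u₀, hu₀⟩ : ∃ u, J (u - a) ≠ J (u - a') := by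
    by_contra! hcon
    refine ZMod.not_periodic_of_exists_ne hJ (sub_ne_zero.2 ha.symm) fun x => ?_
    rw [← add_sub_assoc, hcon (x + a'), add_sub_cancel_right]
  exact const_of_column_periodic ht hf (mul_ne_zero ht (sub_ne_zero.2 hu₀))
    fun v => (shift u₀ v).symm

theorem const_of_eq_fst (hsym : ∀ a, J (-a) = J a) (hJ : ∃ a b, J a ≠ J b) {i j j' : ZMod p}
    (hj : j ≠ j') (h : f (i, j) = f (i, j')) : ∀ z z', f z = f z' := by
  have hγ : f (gamma t J (0, 0) (i, j)) = f (gamma t J (0, 0) (i, j')) := hf.snd rfl h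
  rw [gamma_mk ht hsym, gamma_mk ht hsym] at hγ
  refine const_of_eq_snd ht hf hJ ?_ hγ
  simpa using hj

theorem apply_eq_apply_shift_conj {ε : ZMod p} {ψ : ZMod p → ZMod p}
    (hT : ∀ u v, f (u, v) = f (u + ε, v + ψ u)) (w u v : ZMod p) :
    f (u, v) = f (u + t * ε, v + t * ψ (t⁻¹ * u) + t * (J (u - w) - J (u + t * ε - w))) := by
  let z := sigmaInv t J (w, 0) (u, v)
  calc f (u, v) = f (sigma t J (w, 0) z) := by rw [sigma_sigmaInv ht]
    _ = f (sigma t J (w, 0) (z.1 + ε, z.2 + ψ z.1)) := hf.fst rfl (hT z.1 z.2)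
    _ = _ := by
      simp only [z, sigma, sigmaInv, mul_add, mul_inv_cancel_left₀ ht, add_zero, sub_zero]
      congr 2
      field_simp
      ring

theorem const_of_translation (h2 : (2 : ZMod p) ≠ 0) (hsym : ∀ a, J (-a) = J a)
    (hJ : ∃ a b, J a ≠ J b) {ε : ZMod p} (hε : ε ≠ 0) {ψ : ZMod p → ZMod p}
    (hT : ∀ u v, f (u, v) = f (u + ε, v + ψ u)) : ∀ z z', f z = f z' := by
  let g w := J (0 - w) - J (0 + t * ε - w)
  have vshift : ∀ w w' v, f (0, v + t * (g w - g w')) = f (0, v) := by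
    intro w w' v
    have h := apply_eq_apply_shift_conj ht hf hT w' 0 (v + t * (g w - g w'))
    rw [show v + t * (g w - g w') + t * ψ (t⁻¹ * 0) + t * g w'
        = v + t * ψ (t⁻¹ * 0) + t * g w by ring] at h
    exact h.trans (apply_eq_apply_shift_conj ht hf hT w 0 v).symm
  by_cases hg : ∃ w w', g w ≠ g w'
  · obtain ⟨w, w', hww'⟩ := hg
    exact const_of_column_periodic ht hf (mul_ne_zero ht (sub_ne_zero.2 hww')) (vshift w w')
  push Not at hg
  have hg0 : g 0 ≠ 0 := by
    intro h0
    refine ZMod.not_periodic_of_exists_ne hJ (mul_ne_zero ht hε) fun a => ?_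
    have ha := (hg (-a) 0).trans h0
    simp only [g, zero_sub, neg_neg, zero_add, sub_neg_eq_add, sub_eq_zero] at ha
    rw [add_comm, ha]
  have hgε : g (t * ε) = -g 0 := by
    simp only [g, zero_sub, zero_add, sub_self, sub_zero, hsym, neg_sub]
  have : (2 : ZMod p) * g 0 = 0 := by linear_combination (hg (t * ε) 0).symm.trans hgε
  exact absurd this (mul_ne_zero h2 hg0)

theorem const_of_ne (hsym : ∀ a, J (-a) = J a) (hJ : ∃ a b, J a ≠ J b)
    {x x' : ZMod p × ZMod p} (hx : x ≠ x') (h : f x = f x') : ∀ z z', f z = f z' := by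
  obtain ⟨i, j⟩ := x
  obtain ⟨i', j'⟩ := x'
  by_cases hi : i = i'
  · subst hi
    exact const_of_eq_fst ht hf hsym hJ (fun hj => hx (by rw [hj])) h
  by_cases hj : j = j'
  · subst hj
    exact const_of_eq_snd ht hf hJ hi h
  have hT := apply_eq_apply_shift ht hf h
  by_cases h2 : (2 : ZMod p) = 0
  · have hεδ : j' - j = i' - i :=
      ZMod.eq_of_two_eq_zero h2 (sub_ne_zero.2 (Ne.symm hj)) (sub_ne_zero.2 (Ne.symm hi))
    have hrow := hT i 0
    simp only [hεδ, add_sub_cancel, sub_self, mul_zero, add_zero] at hrow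
    exact const_of_eq_snd ht hf hJ hi hrow
  exact const_of_translation ht hf h2 hsym hJ (sub_ne_zero.2 (Ne.symm hj)) hT

end Simplicity

end PSquared

/-- simple solutions of cardinality `p²` (Theorem `newexample`):
with `t ≠ 0` in `ℤ/(p)` and `j_i` satisfying the symmetry and scaling conditions
and not all equal, `σ_{(i,j)}(k,l) = (tk + j, t(l − j_{tk+j−i}))` defines a
simple solution of the YBE. -/
theorem simple_solution_p_squared (p : ℕ) [Fact p.Prime]
    (t : ZMod p) (ht : t ≠ 0) (J : ZMod p → ZMod p)
    (hsym : ∀ i : ZMod p, J (-i) = J i)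
    (hpow : ∀ (s : ℤ) (i : ZMod p),
      J (t ^ s * i) = t ^ s * J i - (t ^ s - 1) * J 0)
    (hne : ∃ i k : ZMod p, i ≠ k ∧ J i ≠ J k)
    (σ : ZMod p × ZMod p → ZMod p × ZMod p → ZMod p × ZMod p)
    (hσ : ∀ i j k l : ZMod p,
      σ (i, j) (k, l) = (t * k + j, t * (l - J (t * k + j - i))))
    (r : (ZMod p × ZMod p) × (ZMod p × ZMod p) → (ZMod p × ZMod p) × (ZMod p × ZMod p))
    (hr : ∀ x y : ZMod p × ZMod p,
      (r (x, y)).1 = σ x y ∧ σ (σ x y) ((r (x, y)).2) = x) :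
    IsYBSolution r ∧ IsSimpleSolution r := by
  obtain rfl : σ = PSquared.sigma t J := funext fun x => funext fun y => hσ x.1 x.2 y.1 y.2
  obtain rfl : r = PSquared.solution t J := PSquared.eq_solution ht hr
  have hJt : ∀ a, J (t * a) = t * J a - (t - 1) * J 0 := fun a => by simpa using hpow 1 a
  have hJ : ∃ a b, J a ≠ J b := by
    obtain ⟨a, b, -, hab⟩ := hne
    exact ⟨a, b, hab⟩
  have hsol := PSquared.isYBSolution_solution ht hsym hJt
  refine ⟨hsol, inferInstance, fun Y s hs f hsurj hf => ?_⟩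
  by_cases hinj : Injective f
  · exact Or.inl ⟨hinj, hsurj⟩
  obtain ⟨x, x', hfx, hxx⟩ := not_injective_iff.mp hinj
  have hconst := PSquared.const_of_ne ht (hf.kerCompatible hsol.invol hs) hsym hJ hxx hfx
  exact Or.inr ⟨hsurj.forall₂.2 hconst⟩
end

section
/- Let p be a prime number, let t ∈ ℤ/(p) be nonzero, and let j₀,…,j_{p−1} ∈ ℤ/(p) (indices read modulo p) satisfy j_i = j_{−i} for all i and j_{tˢi} = tˢ j_i − (tˢ − 1) j₀ for all i ∈ ℤ/(p) and all s ∈ ℤ. If j_i ≠ j_k for some i ≠ k, then the multiplicative order of t in (ℤ/(p))ˣ is odd. -/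
open Function

/-!
If `t` had even order `2m`, then `t ^ m = -1`, so the relation for `s = m` reads
`J (-i) = 2 J₀ - J i`. Together with `J (-i) = J i` this gives `2 (J i - J₀) = 0`, and
`2 ≠ 0` because `-1 = t ^ m ≠ 1`; hence `J` would be constant.
-/

theorem pow_orderOf_div_two_ne_one {M : Type*} [Monoid M] {t : M} (hfin : IsOfFinOrder t)
    (heven : Even (orderOf t)) : t ^ (orderOf t / 2) ≠ 1 := by
  have hpos := hfin.orderOf_pos
  exact pow_ne_one_of_lt_orderOf (by grind) (by omega)

section HalfOrder

variable {R : Type*} [Ring R] [NoZeroDivisors R] {t : R}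

theorem pow_orderOf_div_two_eq_neg_one (hfin : IsOfFinOrder t) (heven : Even (orderOf t)) :
    t ^ (orderOf t / 2) = -1 := by
  have hsq : t ^ (orderOf t / 2) * t ^ (orderOf t / 2) = 1 := by
    rw [← pow_add, ← two_mul, Nat.mul_div_cancel' (even_iff_two_dvd.mp heven),
      pow_orderOf_eq_one]
  exact (mul_self_eq_one_iff.mp hsq).resolve_left (pow_orderOf_div_two_ne_one hfin heven)

theorem two_ne_zero_of_even_orderOf (hfin : IsOfFinOrder t) (heven : Even (orderOf t)) :
    (2 : R) ≠ 0 := by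
  intro h2
  apply pow_orderOf_div_two_ne_one hfin heven
  rw [pow_orderOf_div_two_eq_neg_one hfin heven]
  exact neg_eq_iff_add_eq_zero.mpr (by rw [one_add_one_eq_two, h2])

end HalfOrder

/-- under the hypotheses of Theorem `newexample`, the
multiplicative order of `t` in `(ℤ/(p))ˣ` is odd. -/
theorem order_of_t_odd (p : ℕ) [Fact p.Prime]
    (t : ZMod p) (ht : t ≠ 0) (J : ZMod p → ZMod p)
    (hsym : ∀ i : ZMod p, J (-i) = J i)
    (hpow : ∀ (s : ℤ) (i : ZMod p),
      J (t ^ s * i) = t ^ s * J i - (t ^ s - 1) * J 0)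
    (hne : ∃ i k : ZMod p, i ≠ k ∧ J i ≠ J k) :
    Odd (orderOf t) := by
  by_contra heven
  rw [Nat.not_odd_iff_even] at heven
  have hfin : IsOfFinOrder t := (isUnit_iff_ne_zero.mpr ht).isOfFinOrder
  have hhalf := pow_orderOf_div_two_eq_neg_one hfin heven
  have h2 := two_ne_zero_of_even_orderOf hfin heven
  have hconst : ∀ i, J i = J 0 := by
    intro i
    have hrefl := hpow (orderOf t / 2 : ℕ) i
    rw [zpow_natCast, hhalf, neg_one_mul, hsym] at hrefl
    have htwice : 2 * (J i - J 0) = 0 := by linear_combination hrefl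
    exact sub_eq_zero.mp ((mul_eq_zero.mp htwice).resolve_left h2)
  obtain ⟨i, k, -, hJ⟩ := hne
  exact hJ ((hconst i).trans (hconst k).symm)
end

section
/- Let p be a prime number, let X = ℤ/(p) × ℤ/(p), and let (X,r) be an indecomposable and irretractable solution of the YBE such that r((i,j),(k,l)) = (σ_{(i,j)}(k,l), σ_{σ_{(i,j)}(k,l)}⁻¹(i,j)) with σ_{(i,j)}(k,l) = (σ_j(k), d_{i,σ_j(k)}(l)) for some families of permutations σ_j and d_{i,k} of ℤ/(p). Then there exist a nonzero t ∈ ℤ/(p) and elements j₀,…,j_{p−1} ∈ ℤ/(p) satisfying j_i = j_{−i} for all i, j_{tˢi} = tˢ j_i − (tˢ − 1) j₀ for all i and all s ∈ ℤ, and j_i ≠ j_k for some i ≠ k, such that (X,r) is isomorphic as a solution to ((ℤ/(p))², r'), where r'((i,j),(k,l)) = (σ'_{(i,j)}(k,l), (σ'_{σ'_{(i,j)}(k,l)})⁻¹(i,j)) and σ'_{(i,j)}(k,l) = (tk + j, t(l − j_{tk+j−i})). -/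
/-!
Write `σ_{(i,j)}(k,l) = (σ_j k, d_{i,σ_j k} l)`. The first components of the braid relation
give `σ_{d_{a,b} l} σ_j = σ_{d_{a,b} j} σ_l`, and irretractability makes `σ` injective and `d`
symmetric. Hence the permutations `τ_l = σ_l σ_0⁻¹` commute, and the group `H` they generate
is normalised by the group generated by the `σ_j`, which is transitive on `ℤ/(p)`. A nontrivial
normal subgroup of a transitive group of prime degree is transitive, so the abelian group `H`
acts regularly: it is the translation group in a suitable coordinate `φ`. Since `σ_0`
normalises it, `σ_0` is affine in that coordinate, so every `σ_l` is `u ↦ t u + c_l` with one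
and the same `t`. In these coordinates the same relation makes each `d_{a,b}` a map
`w ↦ t w + W(a,b)`, and the second components of the braid relation force
`W(a,b) = -t J(b - a)` with `J` as in the statement.
-/

open Function

open Equiv Subgroup

theorem IsYBSolution.fst_braid {X : Type*} {r : X × X → X × X} (hsol : IsYBSolution r)
    (x y z : X) : (r ((r (x, y)).1, (r ((r (x, y)).2, z)).1)).1 = (r (x, (r (y, z)).1)).1 :=
  congrArg (fun p : X × X × X => p.1) (congrFun hsol.braid (x, y, z))

abbrev IsSplitForm {K : Type*} (σ : K → Perm K) (d : K → K → Perm K)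
    (r : (K × K) × (K × K) → (K × K) × (K × K)) : Prop :=
  ∀ i j k l, r ((i, j), (k, l)) =
    ((σ j k, d i (σ j k) l), ((σ (d i (σ j k) l))⁻¹ i, (d (σ j k) i)⁻¹ j))

namespace IsSplitForm

variable {K : Type*} {σ : K → Perm K} {d : K → K → Perm K}
  {r : (K × K) × (K × K) → (K × K) × (K × K)}

theorem braid_fst (hr : IsSplitForm σ d r) (hsol : IsYBSolution r) (i j k l m n : K) :
    (σ (d i (σ j k) l) (σ ((d (σ j k) i)⁻¹ j) m),
      d (σ j k) (σ (d i (σ j k) l) (σ ((d (σ j k) i)⁻¹ j) m))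
        (d ((σ (d i (σ j k) l))⁻¹ i) (σ ((d (σ j k) i)⁻¹ j) m) n)) =
    (σ j (σ l m), d i (σ j (σ l m)) (d k (σ l m) n)) := by
  simpa only [hr] using hsol.fst_braid (i, j) (k, l) (m, n)

theorem sigma_braid (hr : IsSplitForm σ d r) (hsol : IsYBSolution r) (i j k l m : K) :
    σ (d i (σ j k) l) (σ ((d (σ j k) i)⁻¹ j) m) = σ j (σ l m) :=
  congrArg Prod.fst (hr.braid_fst hsol i j k l m m)

theorem d_braid (hr : IsSplitForm σ d r) (hsol : IsYBSolution r) (i j k l m n : K) :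
    d (σ j k) (σ j (σ l m)) (d ((σ (d i (σ j k) l))⁻¹ i) (σ ((d (σ j k) i)⁻¹ j) m) n) =
      d i (σ j (σ l m)) (d k (σ l m) n) := by
  simpa only [hr.sigma_braid hsol] using congrArg Prod.snd (hr.braid_fst hsol i j k l m n)

theorem injective_sigma (hr : IsSplitForm σ d r) (hirr : IsIrretractable r) :
    Injective σ := fun j j' h =>
  (Prod.mk.inj (hirr (j, j) (j, j') fun ⟨k, l⟩ => by simp only [hr, h])).2

theorem injective_d (hr : IsSplitForm σ d r) (hirr : IsIrretractable r) :
    Injective d := fun a a' h =>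
  (Prod.mk.inj (hirr (a, a) (a', a) fun ⟨k, l⟩ => by simp only [hr, h])).1

theorem sigma_d_mul_sigma_swap (hr : IsSplitForm σ d r) (hsol : IsYBSolution r)
    (a b j l : K) : σ (d a b l) * σ j = σ (d b a j) * σ l := by
  ext m
  simpa using hr.sigma_braid hsol a (d b a j) ((σ (d b a j))⁻¹ b) l m

theorem d_comm (hr : IsSplitForm σ d r) (hsol : IsYBSolution r) (hirr : IsIrretractable r)
    (a b : K) : d a b = d b a :=
  Equiv.ext fun l =>
    hr.injective_sigma hirr (mul_right_cancel (hr.sigma_d_mul_sigma_swap hsol a b l l))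

theorem sigma_d_mul_sigma (hr : IsSplitForm σ d r) (hsol : IsYBSolution r)
    (hirr : IsIrretractable r) (a b j l : K) : σ (d a b l) * σ j = σ (d a b j) * σ l := by
  rw [hr.sigma_d_mul_sigma_swap hsol, hr.d_comm hsol hirr]

theorem exists_mem_closure_apply_eq (hr : IsSplitForm σ d r) (hind : IsIndecomposable r)
    (k k' : K) : ∃ π ∈ closure (Set.range σ), π k = k' := by
  have hproj : ∀ g ∈ permGroup r,
      ∃ π ∈ closure (Set.range σ), ∀ u, (g u).1 = π u.1 := by
    intro g hg
    induction hg using closure_induction with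
    | mem g hg =>
      obtain ⟨⟨i, j⟩, hg⟩ := hg
      exact ⟨σ j, subset_closure ⟨j, rfl⟩, fun ⟨k, l⟩ => by rw [hg, hr]⟩
    | one => exact ⟨1, one_mem _, fun u => rfl⟩
    | mul g g' _ _ ih ih' =>
      obtain ⟨π, hπ, hg⟩ := ih
      obtain ⟨π', hπ', hg'⟩ := ih'
      exact ⟨π * π', mul_mem hπ hπ', fun u => by simp only [Perm.mul_apply, hg, hg']⟩
    | inv g _ ih =>
      obtain ⟨π, hπ, hg⟩ := ih
      refine ⟨π⁻¹, inv_mem hπ, fun u => ?_⟩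
      rw [eq_comm, Perm.inv_eq_iff_eq, ← hg, ← Perm.mul_apply, mul_inv_cancel, Perm.one_apply]
  obtain ⟨g, hg, hgk⟩ := hind (k, k) (k', k)
  obtain ⟨π, hπ, hproj⟩ := hproj g hg
  exact ⟨π, hπ, by simpa [hgk] using (hproj (k, k)).symm⟩

end IsSplitForm

theorem ZMod.eq_mul_of_map_add {n : ℕ} {f : ZMod n → ZMod n}
    (hf : ∀ a b, f (a + b) = f a + f b) (x : ZMod n) : f x = x * f 1 := by
  simpa [zsmul_eq_mul, ZMod.intCast_zmod_cast] using
    map_zsmul (AddMonoidHom.mk' f hf) (ZMod.cast x : ℤ) 1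

theorem ZMod.exists_affine_of_normalizes_translations {n : ℕ} [Nontrivial (ZMod n)]
    (q : Perm (ZMod n)) (hq : ∀ e, ∃ e', ∀ m, q (m + e) = q m + e') :
    ∃ t ≠ 0, ∃ c₀, ∀ m, q m = t * m + c₀ := by
  have hadd : ∀ a b, q (a + b) - q 0 = (q a - q 0) + (q b - q 0) := fun a b => by
    obtain ⟨e', he'⟩ := hq b
    have h0 : q b = q 0 + e' := by simpa using he' 0
    rw [he', h0]
    ring
  refine ⟨q 1 - q 0, fun ht => zero_ne_one (q.injective ?_), q 0, fun m => ?_⟩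
  · exact (sub_eq_zero.mp ht).symm
  · rw [← sub_eq_iff_eq_add, mul_comm]
    exact ZMod.eq_mul_of_map_add (f := fun a => q a - q 0) hadd m

section MulInv

variable {G K : Type*} [Group G] {s : K → G} {D : K → K}

theorem eq_mul_mul_inv_of_mul_eq (hD : ∀ j l, s (D l) * s j = s (D j) * s l) (o l : K) :
    s (D l) = s (D o) * s l * (s o)⁻¹ :=
  eq_mul_inv_of_mul_eq (hD o l)

theorem commute_mul_inv_of_mul_eq (hD : ∀ j l, s (D l) * s j = s (D j) * s l) (o j l : K) :
    Commute (s j * (s o)⁻¹) (s l * (s o)⁻¹) := by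
  have h := hD j l
  rw [eq_mul_mul_inv_of_mul_eq hD o l, eq_mul_mul_inv_of_mul_eq hD o j] at h
  calc s j * (s o)⁻¹ * (s l * (s o)⁻¹)
      = (s (D o))⁻¹ * (s (D o) * s j * (s o)⁻¹ * s l) * (s o)⁻¹ := by group
    _ = s l * (s o)⁻¹ * (s j * (s o)⁻¹) := by rw [← h]; group

theorem conj_mul_inv_of_mul_eq (hD : ∀ j l, s (D l) * s j = s (D j) * s l) (o l : K) :
    s o * (s l * (s o)⁻¹) * (s o)⁻¹ =
      (s (D o) * (s o)⁻¹)⁻¹ * (s (D l) * (s o)⁻¹) := by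
  rw [eq_mul_mul_inv_of_mul_eq hD o l]
  group

end MulInv

section PermGroup

variable {α : Type*}

theorem exists_mem_apply_eq_of_prime_card {H : Subgroup (Perm α)} (hp : (Nat.card α).Prime)
    (hH : H ≠ ⊥) (htrans : ∀ x y : α, ∃ g ∈ normalizer (H : Set (Perm α)), g x = y)
    (x y : α) : ∃ h ∈ H, h x = y := by
  set N := normalizer (H : Set (Perm α))
  have : MulAction.IsPretransitive N α :=
    ⟨fun x y => let ⟨g, hg, hgx⟩ := htrans x y; ⟨⟨g, hg⟩, hgx⟩⟩
  have := MulAction.IsPreprimitive.of_prime_card (G := N) hp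
  have hmoves : MulAction.fixedPoints (H.subgroupOf N) α ≠ Set.univ := by
    obtain ⟨h, hne⟩ := H.ne_bot_iff_exists_ne_one.mp hH
    obtain ⟨z, hz⟩ := not_forall.mp fun hfix => hne (Subtype.ext (Equiv.ext hfix))
    intro hall
    have hzfix : z ∈ MulAction.fixedPoints (H.subgroupOf N) α := hall ▸ Set.mem_univ z
    exact hz (hzfix ⟨⟨h, le_normalizer h.2⟩, h.2⟩)
  have := MulAction.IsQuasiPreprimitive.isPretransitive_of_normal hmoves
  obtain ⟨⟨⟨g, _⟩, hgH⟩, hgx⟩ := MulAction.exists_smul_eq (H.subgroupOf N) x y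
  exact ⟨g, hgH, hgx⟩

theorem eq_one_of_apply_eq_self {H : Subgroup (Perm α)}
    (hcomm : ∀ a ∈ H, ∀ b ∈ H, a * b = b * a) (htrans : ∀ x y : α, ∃ h ∈ H, h x = y)
    {h : Perm α} (hh : h ∈ H) {x : α} (hx : h x = x) : h = 1 :=
  Equiv.ext fun y => by
    obtain ⟨g, hg, rfl⟩ := htrans x y
    rw [← Perm.mul_apply, hcomm h hh g hg, Perm.mul_apply, hx, Perm.one_apply]

theorem exists_zmod_equiv_translation {p : ℕ} [Fact p.Prime] {H : Subgroup (Perm α)}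
    (hα : Nat.card α = p) (hfree : ∀ h ∈ H, ∀ x, h x = x → h = 1)
    (htrans : ∀ x y : α, ∃ h ∈ H, h x = y) :
    ∃ φ : ZMod p ≃ α, (∀ h ∈ H, ∃ e, ∀ n, h (φ n) = φ (n + e)) ∧
      ∀ e, ∃ h ∈ H, ∀ n, h (φ n) = φ (n + e) := by
  obtain ⟨⟨x₀⟩, -⟩ := Nat.card_pos_iff.mp (hα ▸ (Fact.out : p.Prime).pos)
  have hbij : Bijective fun h : H => (h : Perm α) x₀ := by
    refine ⟨fun h h' hx => ?_, fun y => ?_⟩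
    · have := hfree _ (mul_mem (inv_mem h'.2) h.2) x₀ (by
        rw [Perm.mul_apply, Perm.inv_eq_iff_eq]; exact hx)
      exact Subtype.ext (inv_mul_eq_one.mp this).symm
    · obtain ⟨h, hh, rfl⟩ := htrans x₀ y
      exact ⟨⟨h, hh⟩, rfl⟩
  let ψ : Multiplicative (ZMod p) ≃* H :=
    mulEquivOfPrimeCardEq (by simp) ((Nat.card_eq_of_bijective _ hbij).trans hα)
  let φ : ZMod p ≃ α :=
    (Multiplicative.ofAdd.trans ψ.toEquiv).trans (Equiv.ofBijective _ hbij)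
  have hφ : ∀ n e, φ (n + e) = (ψ (.ofAdd e) : Perm α) (φ n) := fun n e => by
    simp [φ, add_comm n e, ofAdd_add, Perm.mul_apply]
  refine ⟨φ, fun h hh => ⟨(ψ.symm ⟨h, hh⟩).toAdd, fun n => ?_⟩,
    fun e => ⟨_, (ψ (.ofAdd e)).2, fun n => (hφ n e).symm⟩⟩
  rw [hφ]
  simp

theorem exists_affine_coords_of_regular {p : ℕ} [Fact p.Prime] {H : Subgroup (Perm α)}
    (hα : Nat.card α = p) (hfree : ∀ h ∈ H, ∀ x, h x = x → h = 1)
    (htrans : ∀ x y : α, ∃ h ∈ H, h x = y) {q : Perm α}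
    (hq : q ∈ normalizer (H : Set (Perm α))) :
    ∃ φ : ZMod p ≃ α, ∃ t ≠ 0, ∃ c₀, (∀ n, q (φ n) = φ (t * n + c₀)) ∧
      ∀ h ∈ H, ∃ e, ∀ n, h (φ n) = φ (n + e) := by
  obtain ⟨φ, hHφ, hφH⟩ := exists_zmod_equiv_translation hα hfree htrans
  let q' : Perm (ZMod p) := (φ.trans q).trans φ.symm
  have hq' : ∀ e, ∃ e', ∀ n, q' (n + e) = q' n + e' := fun e => by
    obtain ⟨h, hh, hφh⟩ := hφH e
    obtain ⟨e', he'⟩ := hHφ _ ((hq h).mp hh)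
    refine ⟨e', fun n => φ.injective ?_⟩
    have := he' (q' n)
    simp only [q', Equiv.trans_apply, Equiv.apply_symm_apply, Perm.mul_apply] at this ⊢
    rw [← hφh, ← this, Perm.coe_inv, Equiv.symm_apply_apply]
  obtain ⟨t, ht, c₀, hq't⟩ := ZMod.exists_affine_of_normalizes_translations q' hq'
  exact ⟨φ, t, ht, c₀, fun n => φ.symm_apply_eq.mp (hq't n), hHφ⟩

end PermGroup

section AffineCoords

variable {K : Type*} {s : K → Perm K} {D : K → K}

theorem closure_le_normalizer_closure_mul_inv [Finite K]
    (hD : ∀ j l, s (D l) * s j = s (D j) * s l) (o : K) :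
    closure (Set.range s) ≤
      normalizer (closure (Set.range fun l => s l * (s o)⁻¹) : Set (Perm K)) := by
  set H := closure (Set.range fun l => s l * (s o)⁻¹)
  have hτ : ∀ l, s l * (s o)⁻¹ ∈ H := fun l => subset_closure ⟨l, rfl⟩
  have hconj : H ≤ H.comap (MulAut.conj (s o)).toMonoidHom := (closure_le _).mpr <| by
    rintro _ ⟨l, rfl⟩
    change s o * (s l * (s o)⁻¹) * (s o)⁻¹ ∈ H
    rw [conj_mul_inv_of_mul_eq hD]
    exact mul_mem (inv_mem (hτ _)) (hτ _)
  have hq : s o ∈ normalizer (H : Set (Perm K)) := mem_normalizer_fintype fun n hn => hconj hn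
  refine (closure_le _).mpr ?_
  rintro _ ⟨l, rfl⟩
  rw [← inv_mul_cancel_right (s l) (s o)]
  exact mul_mem (le_normalizer (hτ l)) hq

theorem exists_affine_coords_of_mul_eq {p : ℕ} [Fact p.Prime] (hK : Nat.card K = p)
    (hinj : Injective s) (hD : ∀ j l, s (D l) * s j = s (D j) * s l)
    (htrans : ∀ x y, ∃ g ∈ closure (Set.range s), g x = y) :
    ∃ φ : ZMod p ≃ K, ∃ c : K ≃ ZMod p, ∃ t ≠ 0,
      ∀ x u, s x (φ u) = φ (t * u + c x) := by
  obtain ⟨⟨o⟩, _⟩ := Nat.card_pos_iff.mp (hK ▸ (Fact.out : p.Prime).pos)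
  set H := closure (Set.range fun l => s l * (s o)⁻¹)
  have hτ : ∀ l, s l * (s o)⁻¹ ∈ H := fun l => subset_closure ⟨l, rfl⟩
  have hcomm : ∀ a ∈ H, ∀ b ∈ H, a * b = b * a := by
    have := isMulCommutative_closure (k := Set.range fun l => s l * (s o)⁻¹) <| by
      rintro _ ⟨j, rfl⟩ _ ⟨l, rfl⟩
      exact commute_mul_inv_of_mul_eq hD o j l
    exact fun a ha b hb => setLike_mul_comm ha hb
  have hnorm := closure_le_normalizer_closure_mul_inv hD o
  have hH : H ≠ ⊥ := by
    have : Nontrivial K :=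
      Finite.one_lt_card_iff_nontrivial.mp (hK ▸ (Fact.out : p.Prime).one_lt)
    obtain ⟨l, hl⟩ := exists_ne o
    intro hbot
    have hτl := hτ l
    rw [hbot, mem_bot, mul_inv_eq_one] at hτl
    exact hl (hinj hτl)
  have htransH := exists_mem_apply_eq_of_prime_card (hK ▸ Fact.out) hH
    fun x y => (htrans x y).imp fun g hg => ⟨hnorm hg.1, hg.2⟩
  obtain ⟨φ, t, ht, c₀, hq, hHφ⟩ := exists_affine_coords_of_regular hK
    (fun h hh x hx => eq_one_of_apply_eq_self hcomm htransH hh hx) htransH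
    (hnorm (subset_closure ⟨o, rfl⟩))
  choose e he using fun l => hHφ _ (hτ l)
  have hs : ∀ l u, s l (φ u) = φ (t * u + (c₀ + e l)) := fun l u => by
    rw [← add_assoc, ← he, ← hq, ← Perm.mul_apply, inv_mul_cancel_right]
  have hc : Injective fun l => c₀ + e l := fun l l' hll => hinj <| Equiv.ext fun x => by
    obtain ⟨u, rfl⟩ := φ.surjective x
    rw [hs, hs, show c₀ + e l = c₀ + e l' from hll]
  exact ⟨φ, Equiv.ofBijective _ (hc.bijective_of_nat_card_le (by simp [hK])), t, ht, hs⟩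

end AffineCoords

theorem IsSplitForm.exists_affine_coords {K : Type*} {σ : K → Perm K} {d : K → K → Perm K}
    {r : (K × K) × (K × K) → (K × K) × (K × K)} {p : ℕ} [Fact p.Prime]
    (hK : Nat.card K = p) (hr : IsSplitForm σ d r) (hsol : IsYBSolution r)
    (hind : IsIndecomposable r) (hirr : IsIrretractable r) :
    ∃ φ : ZMod p ≃ K, ∃ c : K ≃ ZMod p, ∃ t ≠ 0,
      ∀ x u, σ x (φ u) = φ (t * u + c x) := by
  obtain ⟨⟨o⟩, -⟩ := Nat.card_pos_iff.mp (hK ▸ (Fact.out : p.Prime).pos)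
  exact exists_affine_coords_of_mul_eq hK (hr.injective_sigma hirr)
    (hr.sigma_d_mul_sigma hsol hirr o o) (hr.exists_mem_closure_apply_eq hind)

def dOffset {F K : Type*} [Zero F] (φ : F ≃ K) (c : K ≃ F) (d : K → K → Perm K)
    (a b : F) : F :=
  c (d (φ a) (φ b) (c.symm 0))

namespace IsSplitForm

variable {F K : Type*} [Field F] {σ : K → Perm K} {d : K → K → Perm K}
  {r : (K × K) × (K × K) → (K × K) × (K × K)} {φ : F ≃ K} {c : K ≃ F} {t : F}

theorem apply_d_eq_of_affine (hr : IsSplitForm σ d r) (hsol : IsYBSolution r)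
    (hirr : IsIrretractable r) (hσ : ∀ x u, σ x (φ u) = φ (t * u + c x)) (a b l : K) :
    c (d a b l) = t * c l + c (d a b (c.symm 0)) := by
  have key : ∀ j l, t * c j + c (d a b l) = t * c l + c (d a b j) := fun j l => by
    simpa [Perm.mul_apply, hσ] using
      congrArg (fun g : Perm K => φ.symm (g (φ 0))) (hr.sigma_d_mul_sigma hsol hirr a b j l)
  simpa [add_comm] using key (c.symm 0) l

theorem d_apply_eq_dOffset (hr : IsSplitForm σ d r) (hsol : IsYBSolution r)
    (hirr : IsIrretractable r) (hσ : ∀ x u, σ x (φ u) = φ (t * u + c x)) (a b w : F) :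
    d (φ a) (φ b) (c.symm w) = c.symm (t * w + dOffset φ c d a b) := by
  rw [c.eq_symm_apply, hr.apply_d_eq_of_affine hsol hirr hσ, c.apply_symm_apply, dOffset]

/-- The second components of the braid relation at `(φ a, c⁻¹ w₁)`, `(φ b, c⁻¹ w₂)`,
`(φ u, _)`. -/
theorem braid_dOffset (hr : IsSplitForm σ d r) (hsol : IsYBSolution r)
    (hirr : IsIrretractable r) (hσ : ∀ x u, σ x (φ u) = φ (t * u + c x)) (ht : t ≠ 0)
    (a b w₁ w₂ u : F) :
    t * dOffset φ c d ((a - (t * w₂ + dOffset φ c d a (t * b + w₁))) * t⁻¹)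
          (t * u + (w₁ - dOffset φ c d (t * b + w₁) a) * t⁻¹) +
        dOffset φ c d (t * b + w₁) (t * (t * u + w₂) + w₁) =
      t * dOffset φ c d b (t * u + w₂) + dOffset φ c d a (t * (t * u + w₂) + w₁) := by
  have hσ' : ∀ w u, σ (c.symm w) (φ u) = φ (t * u + w) := fun w u => by
    rw [hσ, c.apply_symm_apply]
  have hσinv : ∀ x u, (σ x)⁻¹ (φ u) = φ ((u - c x) * t⁻¹) := fun x u => by
    rw [Perm.inv_eq_iff_eq, hσ]; congr 1; field_simp; ring
  have hdinv : ∀ a b w,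
      (d (φ a) (φ b))⁻¹ (c.symm w) = c.symm ((w - dOffset φ c d a b) * t⁻¹) :=
    fun a b w => by
      rw [Perm.inv_eq_iff_eq, hr.d_apply_eq_dOffset hsol hirr hσ]; congr 1; field_simp; ring
  have h := congrArg c (hr.d_braid hsol (φ a) (c.symm w₁) (φ b) (c.symm w₂) (φ u) (c.symm 0))
  simpa only [hσ', hr.d_apply_eq_dOffset hsol hirr hσ, hσinv, hdinv, c.apply_symm_apply,
    mul_zero, zero_add] using h

theorem dOffset_comm (hr : IsSplitForm σ d r) (hsol : IsYBSolution r)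
    (hirr : IsIrretractable r) (a b : F) : dOffset φ c d a b = dOffset φ c d b a := by
  rw [dOffset, dOffset, hr.d_comm hsol hirr]

theorem dOffset_add_add (hr : IsSplitForm σ d r) (hsol : IsYBSolution r)
    (hirr : IsIrretractable r) (hσ : ∀ x u, σ x (φ u) = φ (t * u + c x)) (ht : t ≠ 0)
    (x y z : F) : dOffset φ c d (x + z) (y + z) = dOffset φ c d x y := by
  obtain ⟨α, hα⟩ : ∃ α, t * α + dOffset φ c d 0 0 = 0 :=
    ⟨-dOffset φ c d 0 0 * t⁻¹, by field_simp; ring⟩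
  have key : ∀ x y, dOffset φ c d x y = dOffset φ c d α (y + α - x) := fun x y => by
    have h := hr.braid_dOffset hsol hirr hσ ht 0 α (dOffset φ c d 0 0) (α - x) (y * t⁻¹)
    rw [hα, sub_self, zero_mul, add_zero,
      show t * (α - x) + dOffset φ c d 0 0 = -(t * x) by linear_combination hα,
      show (0 - -(t * x)) * t⁻¹ = x by field_simp; ring,
      show t * (y * t⁻¹) = y by field_simp] at h
    rw [mul_left_cancel₀ ht (add_right_cancel h)]
    ring_nf
  rw [key, key x y]
  ring_nf

theorem dOffset_eq_of_sub_eq (hr : IsSplitForm σ d r) (hsol : IsYBSolution r)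
    (hirr : IsIrretractable r) (hσ : ∀ x u, σ x (φ u) = φ (t * u + c x)) (ht : t ≠ 0)
    {x y x' y' : F} (h : y - x = y' - x') : dOffset φ c d x y = dOffset φ c d x' y' := by
  rw [← hr.dOffset_add_add hsol hirr hσ ht x y (x' - x)]
  congr 1
  · ring
  · linear_combination h

theorem dOffset_zero_mul (hr : IsSplitForm σ d r) (hsol : IsYBSolution r)
    (hirr : IsIrretractable r) (hσ : ∀ x u, σ x (φ u) = φ (t * u + c x)) (ht : t ≠ 0)
    (x : F) :
    dOffset φ c d 0 (t * x) = t * dOffset φ c d 0 x - (t - 1) * dOffset φ c d 0 0 := by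
  have hsub {x y x' y' : F} (h : y - x = y' - x') :=
    hr.dOffset_eq_of_sub_eq hsol hirr hσ ht h
  set ω := dOffset φ c d 0 (t * x)
  have hA : dOffset φ c d (-(t * x)) 0 = ω := hsub (by ring)
  have hB : dOffset φ c d 0 (-(t * x)) = ω := by rw [hr.dOffset_comm hsol hirr, hA]
  have hC : dOffset φ c d ((-(t * x) - ω) * t⁻¹) (-ω * t⁻¹) = dOffset φ c d 0 x :=
    hsub (by field_simp; ring)
  have h := hr.braid_dOffset hsol hirr hσ ht (-(t * x)) 0 0 0 0
  simp only [mul_zero, add_zero, zero_add, zero_sub] at h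
  rw [hA, hB, hC] at h
  linear_combination -h

theorem exists_offset_fun (hr : IsSplitForm σ d r) (hsol : IsYBSolution r)
    (hirr : IsIrretractable r) (hσ : ∀ x u, σ x (φ u) = φ (t * u + c x)) (ht : t ≠ 0) :
    ∃ J : F → F, (∀ i, J (-i) = J i) ∧ (∀ x, J (t * x) = t * J x - (t - 1) * J 0) ∧
      (∃ i k, i ≠ k ∧ J i ≠ J k) ∧
      ∀ i k l, d (φ i) (φ k) (c.symm l) = c.symm (t * (l - J (k - i))) := by
  have hsub {x y x' y' : F} (h : y - x = y' - x') :=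
    hr.dOffset_eq_of_sub_eq hsol hirr hσ ht h
  have hd : ∀ i k l, d (φ i) (φ k) (c.symm l) = c.symm (t * l + dOffset φ c d 0 (k - i)) :=
    fun i k l => by
      rw [hr.d_apply_eq_dOffset hsol hirr hσ, hsub (x' := 0) (y' := k - i) (by ring)]
  refine ⟨fun δ => -(t⁻¹ * dOffset φ c d 0 δ), fun i => ?_, fun x => ?_, ?_,
    fun i k l => by rw [hd]; congr 1; field_simp; ring⟩
  · dsimp only
    rw [hsub (x := 0) (y := -i) (x' := i) (y' := 0) (by ring), hr.dOffset_comm hsol hirr]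
  · dsimp only
    rw [hr.dOffset_zero_mul hsol hirr hσ ht]
    field_simp
    ring
  · by_contra! hconst
    have hW : ∀ δ, dOffset φ c d 0 δ = dOffset φ c d 0 0 := fun δ => by
      by_cases hδ : δ = 0
      · rw [hδ]
      · simpa [ht] using hconst δ 0 hδ
    have : d (φ 0) = d (φ 1) := funext fun b => Equiv.ext fun l => by
      rw [← φ.apply_symm_apply b, ← c.symm_apply_apply l, hd, hd, hW (_ - 0), hW (_ - 1)]
    exact zero_ne_one (φ.injective (hr.injective_d hirr this))

end IsSplitForm

theorem apply_zpow_mul_of_apply_mul {F : Type*} [Field F] {t : F} (ht : t ≠ 0) {J : F → F}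
    (hJ : ∀ x, J (t * x) = t * J x - (t - 1) * J 0) (s : ℤ) (x : F) :
    J (t ^ s * x) = t ^ s * J x - (t ^ s - 1) * J 0 := by
  have hJinv : ∀ x, J (t⁻¹ * x) = t⁻¹ * J x - (t⁻¹ - 1) * J 0 := fun x => by
    have := hJ (t⁻¹ * x)
    rw [mul_inv_cancel_left₀ ht] at this
    rw [this]
    field_simp
    ring
  induction s using Int.induction_on generalizing x with
  | zero => simp
  | succ n ih =>
    rw [zpow_add_one₀ ht, mul_comm _ t, mul_assoc, hJ, ih]
    ring
  | pred n ih =>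
    rw [zpow_sub_one₀ ht, mul_comm _ t⁻¹, mul_assoc, hJinv, ih]
    ring

section AffineSolution

variable {F : Type*} [Field F]

def affineSigma (t : F) (J : F → F) (x y : F × F) : F × F :=
  (t * y.1 + x.2, t * (y.2 - J (t * y.1 + x.2 - x.1)))

def affineR (t : F) (J : F → F) (w : (F × F) × (F × F)) : (F × F) × (F × F) :=
  let z := affineSigma t J w.1 w.2
  (z, ((w.1.1 - z.2) * t⁻¹, w.1.2 * t⁻¹ + J (w.1.1 - z.1)))

theorem affineSigma_affineR_snd {t : F} (ht : t ≠ 0) (J : F → F) (x y : F × F) :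
    affineSigma t J (affineSigma t J x y) (affineR t J (x, y)).2 = x := by
  set z := affineSigma t J x y
  have h₁ : t * ((x.1 - z.2) * t⁻¹) + z.2 = x.1 := by field_simp; ring
  refine Prod.ext h₁ ?_
  change t * ((x.2 * t⁻¹ + J (x.1 - z.1)) - J (t * ((x.1 - z.2) * t⁻¹) + z.2 - z.1)) = x.2
  rw [h₁, add_sub_cancel_right]
  field_simp

theorem IsSplitForm.isSolHom_affineR {K : Type*} {σ : K → Perm K} {d : K → K → Perm K}
    {r : (K × K) × (K × K) → (K × K) × (K × K)} (hr : IsSplitForm σ d r) {φ : F ≃ K}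
    {c : K ≃ F} {t : F} {J : F → F} (hσ : ∀ x u, σ x (φ u) = φ (t * u + c x))
    (hd : ∀ i k l, d (φ i) (φ k) (c.symm l) = c.symm (t * (l - J (k - i)))) :
    IsSolHom (affineR t J) r fun u => (φ u.1, c.symm u.2) := by
  rintro ⟨i, j⟩ ⟨k, l⟩
  simp only [affineR, affineSigma, hr, hσ, c.apply_symm_apply, hd]

end AffineSolution

/-- every indecomposable irretractable solution on
`ℤ/(p) × ℤ/(p)` of the special form
`σ_{(i,j)}(k,l) = (σ_j(k), d_{i,σ_j(k)}(l))` is isomorphic to one of the simple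
solutions of Theorem `newexample`. -/
theorem classification_p_squared (p : ℕ) [Fact p.Prime]
    (σ : ZMod p → Equiv.Perm (ZMod p)) (d : ZMod p → ZMod p → Equiv.Perm (ZMod p))
    (r : (ZMod p × ZMod p) × (ZMod p × ZMod p) → (ZMod p × ZMod p) × (ZMod p × ZMod p))
    (hr : ∀ i j k l : ZMod p,
      r ((i, j), (k, l)) = ((σ j k, d i (σ j k) l),
        ((σ (d i (σ j k) l))⁻¹ i, (d (σ j k) i)⁻¹ j)))
    (hsol : IsYBSolution r) (hind : IsIndecomposable r) (hirr : IsIrretractable r) :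
    ∃ t : ZMod p, t ≠ 0 ∧ ∃ J : ZMod p → ZMod p,
      (∀ i : ZMod p, J (-i) = J i) ∧
      (∀ (s : ℤ) (i : ZMod p), J (t ^ s * i) = t ^ s * J i - (t ^ s - 1) * J 0) ∧
      (∃ i k : ZMod p, i ≠ k ∧ J i ≠ J k) ∧
      ∃ (σ' : ZMod p × ZMod p → ZMod p × ZMod p → ZMod p × ZMod p)
        (r' : (ZMod p × ZMod p) × (ZMod p × ZMod p) →
              (ZMod p × ZMod p) × (ZMod p × ZMod p)),
        (∀ i j k l : ZMod p,
          σ' (i, j) (k, l) = (t * k + j, t * (l - J (t * k + j - i)))) ∧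
        (∀ x y : ZMod p × ZMod p,
          (r' (x, y)).1 = σ' x y ∧ σ' (σ' x y) ((r' (x, y)).2) = x) ∧
        ∃ f : ZMod p × ZMod p → ZMod p × ZMod p,
          Function.Bijective f ∧ IsSolHom r' r f := by
  obtain ⟨φ, c, t, ht, hσ⟩ :=
    IsSplitForm.exists_affine_coords (Nat.card_zmod p) hr hsol hind hirr
  obtain ⟨J, hJneg, hJmul, hJne, hd⟩ := IsSplitForm.exists_offset_fun hr hsol hirr hσ ht
  exact ⟨t, ht, J, hJneg, apply_zpow_mul_of_apply_mul ht hJmul, hJne, affineSigma t J,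
    affineR t J, fun _ _ _ _ => rfl, fun x y => ⟨rfl, affineSigma_affineR_snd ht J x y⟩,
    fun u => (φ u.1, c.symm u.2), (φ.prodCongr c.symm).bijective,
    IsSplitForm.isSolHom_affineR hr hσ hd⟩
end

section
/- Let n > 1 be an integer and let j₀,…,j_{n−1} ∈ ℤ/(n) (indices read modulo n) satisfy j_i = j_{−i} for all i ∈ ℤ/(n). Let X = (ℤ/(n))² and define r : X × X → X × X by r((i,j),(k,l)) = (σ_{(i,j)}(k,l), σ_{σ_{(i,j)}(k,l)}⁻¹(i,j)), where σ_{(i,j)}(k,l) = (k + j, l − j_{k+j−i}). Then (X,r) is a solution of the YBE; it is indecomposable if and only if the subgroup of (ℤ/(n),+) generated by {j₀,…,j_{n−1}} is all of ℤ/(n); and it is irretractable if and only if whenever j_{i+k} = j_{i'+k} for every k ∈ ℤ/(n), one has i = i'. -/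
open Function

/-!
The permutation `σ_{(i,j)}` is the shift `(k,l) ↦ (k + j, l - J (k + j - i))`, so a product of
such permutations changes second coordinates only by elements of `⟨J⟩`; conversely
`σ_{(k-s,0)}` fixes the column `k` and moves down it by `J s`, while `σ_{(0,d)}` moves
column `k` to column `k + d`, which together give transitivity when `⟨J⟩` is everything.
`σ_{(i,j)}` is determined by `j` and the row `k ↦ J (j - i + k)`, whence the irretractability
criterion. For even `J` the second component `σ_{σ_x y}⁻¹ x` of `r` has the closed form
`asymGamma`, in which the Yang–Baxter identities become identities of abelian groups.
-/

theorem permGroup_eq_closure_range {X : Type*} {r : X × X → X × X} (σ : X → Equiv.Perm X)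
    (hσ : ∀ x y, (r (x, y)).1 = σ x y) : permGroup r = Subgroup.closure (Set.range σ) := by
  simp only [permGroup, hσ, ← Equiv.ext_iff, Set.range, eq_comm]

theorem isIrretractable_iff_injective {X : Type*} {r : X × X → X × X} (σ : X → Equiv.Perm X)
    (hσ : ∀ x y, (r (x, y)).1 = σ x y) : IsIrretractable r ↔ Function.Injective σ := by
  simp only [IsIrretractable, hσ, ← Equiv.ext_iff, Function.Injective]

section Shifts

variable {A : Type*} [AddCommGroup A]

def displacementSubgroup {X : Type*} (f : X → A) (H : AddSubgroup A) :
    Subgroup (Equiv.Perm X) where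
  carrier := {g | ∀ x, f (g x) - f x ∈ H}
  one_mem' x := by simp
  mul_mem' {g h} hg hh x := by simpa using add_mem (hg (h x)) (hh x)
  inv_mem' {g} hg x := by simpa using neg_mem (hg (g⁻¹ x))

def verticalShifts (G : Subgroup (Equiv.Perm (A × A))) : AddSubgroup A where
  carrier := {c | ∀ p, ∃ g ∈ G, g p = p + (0, c)}
  zero_mem' p := ⟨1, G.one_mem, by simp⟩
  add_mem' {a b} ha hb p := by
    obtain ⟨g, hg, e⟩ := ha p
    obtain ⟨g', hg', e'⟩ := hb (p + (0, a))
    exact ⟨g' * g, G.mul_mem hg' hg, by simp [e, e', add_assoc]⟩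
  neg_mem' {a} ha p := by
    obtain ⟨g, hg, e⟩ := ha (p + (0, -a))
    refine ⟨g⁻¹, G.inv_mem hg, ?_⟩
    rw [Equiv.Perm.inv_eq_iff_eq, e]
    ext <;> simp

end Shifts

variable {A : Type*} [AddCommGroup A] (J : A → A)

def asymSigma (x : A × A) : Equiv.Perm (A × A) where
  toFun y := (y.1 + x.2, y.2 - J (y.1 + x.2 - x.1))
  invFun z := (z.1 - x.2, z.2 + J (z.1 - x.1))
  left_inv y := by simp
  right_inv z := by simp

-- `z.2 - z.1 = x.2 - x.1 + y.2` for `z = γ_y x`, so the argument of `J` can be read off `z`.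
def asymGamma (y : A × A) : Equiv.Perm (A × A) where
  toFun x := (x.1 - y.2 + J (y.1 + x.2 - x.1), x.2 + J (y.1 + x.2 - x.1))
  invFun z := (z.1 + y.2 - J (y.1 - y.2 + z.2 - z.1), z.2 - J (y.1 - y.2 + z.2 - z.1))
  left_inv x := by
    have : y.1 - y.2 + (x.2 + J (y.1 + x.2 - x.1)) - (x.1 - y.2 + J (y.1 + x.2 - x.1))
        = y.1 + x.2 - x.1 := by abel
    ext <;> simp only [this] <;> abel
  right_inv z := by
    have : y.1 + (z.2 - J (y.1 - y.2 + z.2 - z.1)) - (z.1 + y.2 - J (y.1 - y.2 + z.2 - z.1))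
        = y.1 - y.2 + z.2 - z.1 := by abel
    ext <;> simp only [this] <;> abel

def asymR (p : (A × A) × (A × A)) : (A × A) × (A × A) :=
  (asymSigma J p.1 p.2, (asymSigma J (asymSigma J p.1 p.2)).symm p.1)

@[simp]
theorem asymSigma_apply (x y : A × A) :
    asymSigma J x y = (y.1 + x.2, y.2 - J (y.1 + x.2 - x.1)) := rfl

@[simp]
theorem asymGamma_apply (x y : A × A) :
    asymGamma J y x = (x.1 - y.2 + J (y.1 + x.2 - x.1), x.2 + J (y.1 + x.2 - x.1)) := rfl

section Symmetric

variable {J} (hsym : ∀ a, J (-a) = J a)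
include hsym

theorem asymR_apply (x y : A × A) : asymR J (x, y) = (asymSigma J x y, asymGamma J y x) := by
  refine Prod.ext rfl (Prod.ext ?_ ?_)
  · show x.1 - (y.2 - J (y.1 + x.2 - x.1)) = x.1 - y.2 + J (y.1 + x.2 - x.1)
    abel
  · show x.2 + J (x.1 - (y.1 + x.2)) = x.2 + J (y.1 + x.2 - x.1)
    rw [show x.1 - (y.1 + x.2) = -(y.1 + x.2 - x.1) by abel, hsym]

theorem isYBSolution_asymR : IsYBSolution (asymR J) where
  invol := by
    rintro ⟨x, y⟩
    have ht : x.1 - y.2 + J (y.1 + x.2 - x.1) + (y.2 - J (y.1 + x.2 - x.1)) - (y.1 + x.2)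
        = -(y.1 + x.2 - x.1) := by abel
    rw [asymR_apply hsym, asymR_apply hsym]
    ext <;> simp only [asymSigma_apply, asymGamma_apply, ht, hsym] <;> abel
  sigma_bij x := by simpa only [asymR_apply hsym] using (asymSigma J x).bijective
  gamma_bij y := by simpa only [asymR_apply hsym] using (asymGamma J y).bijective
  braid := by
    funext ⟨x, y, z⟩
    simp only [Function.comp_apply, yb12, yb23, asymR_apply hsym, asymSigma_apply, asymGamma_apply]
    abel_nf

end Symmetric

theorem eq_asymR {σ : A × A → A × A → A × A}
    (hσ : ∀ i j k l : A, σ (i, j) (k, l) = (k + j, l - J (k + j - i)))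
    {r : (A × A) × (A × A) → (A × A) × (A × A)}
    (hr : ∀ x y : A × A, (r (x, y)).1 = σ x y ∧ σ (σ x y) ((r (x, y)).2) = x) :
    r = asymR J := by
  have hσJ : σ = fun x y => asymSigma J x y := by
    funext ⟨i, j⟩ ⟨k, l⟩
    exact hσ i j k l
  subst hσJ
  funext ⟨x, y⟩
  obtain ⟨h1, h2⟩ := hr x y
  exact Prod.ext h1 ((asymSigma J _).eq_symm_apply.mpr h2)

theorem asymSigma_injective_iff :
    Function.Injective (asymSigma J) ↔ ∀ i i' : A, (∀ k, J (i + k) = J (i' + k)) → i = i' := by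
  constructor
  · intro hinj i i' hJ
    have h := congrArg Prod.fst <| hinj (a₁ := (-i, 0)) (a₂ := (-i', 0)) <| Equiv.ext fun p => by
      simp only [asymSigma_apply]
      rw [show p.1 + 0 - -i = i + p.1 by abel, show p.1 + 0 - -i' = i' + p.1 by abel, hJ]
    exact neg_injective h
  · intro hJ x x' hxx'
    have hsnd : x.2 = x'.2 := by
      simpa using congrArg Prod.fst (Equiv.ext_iff.mp hxx' (0, 0))
    have hrow : ∀ k, J (x.2 - x.1 + k) = J (x.2 - x'.1 + k) := fun k => by
      have h := congrArg Prod.snd (Equiv.ext_iff.mp hxx' (k, 0))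
      simp only [asymSigma_apply, zero_sub, neg_inj, ← hsnd] at h
      convert h using 2 <;> abel
    exact Prod.ext (by simpa using hJ _ _ hrow) hsnd

theorem isIrretractable_asymR_iff :
    IsIrretractable (asymR J) ↔ ∀ i i' : A, (∀ k, J (i + k) = J (i' + k)) → i = i' :=
  (isIrretractable_iff_injective _ fun _ _ => rfl).trans (asymSigma_injective_iff J)

theorem closure_range_asymSigma_le_displacementSubgroup :
    Subgroup.closure (Set.range (asymSigma J)) ≤
      displacementSubgroup Prod.snd (AddSubgroup.closure (Set.range J)) := by
  refine (Subgroup.closure_le _).2 ?_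
  rintro _ ⟨x, rfl⟩ p
  show p.2 - J (p.1 + x.2 - x.1) - p.2 ∈ _
  rw [sub_sub_cancel_left]
  exact neg_mem (AddSubgroup.subset_closure (Set.mem_range_self _))

theorem closure_range_le_verticalShifts :
    AddSubgroup.closure (Set.range J) ≤
      verticalShifts (Subgroup.closure (Set.range (asymSigma J))) := by
  refine (AddSubgroup.closure_le _).2 ?_
  rintro _ ⟨s, rfl⟩
  refine neg_mem_iff.mp fun p => ⟨asymSigma J (p.1 - s, 0), Subgroup.subset_closure ⟨_, rfl⟩, ?_⟩
  ext <;> simp [sub_eq_add_neg]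

theorem isIndecomposable_asymR_iff :
    IsIndecomposable (asymR J) ↔ AddSubgroup.closure (Set.range J) = ⊤ := by
  rw [IsIndecomposable, permGroup_eq_closure_range (asymSigma J) fun _ _ => rfl]
  constructor
  · intro htrans
    refine eq_top_iff.2 fun t _ => ?_
    obtain ⟨g, hg, hgt⟩ := htrans 0 (0, t)
    simpa [hgt] using closure_range_asymSigma_le_displacementSubgroup J hg 0
  · rintro htop ⟨k, l⟩ ⟨k', l'⟩
    have hshift : l' - (l - J k') ∈ verticalShifts _ :=
      closure_range_le_verticalShifts J (htop ▸ AddSubgroup.mem_top _)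
    obtain ⟨g, hg, e⟩ := hshift (k', l - J k')
    refine ⟨g * asymSigma J (0, k' - k), Subgroup.mul_mem _ hg (Subgroup.subset_closure ⟨_, rfl⟩), ?_⟩
    rw [Equiv.Perm.mul_apply, show asymSigma J (0, k' - k) (k, l) = (k', l - J k') by simp, e]
    simp

theorem asymmetric_product_solution_indecomposable_irretractable_iff_general
    (n : ℕ) (J : ZMod n → ZMod n)
    (hsym : ∀ i : ZMod n, J (-i) = J i)
    (σ : ZMod n × ZMod n → ZMod n × ZMod n → ZMod n × ZMod n)
    (hσ : ∀ i j k l : ZMod n, σ (i, j) (k, l) = (k + j, l - J (k + j - i)))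
    (r : (ZMod n × ZMod n) × (ZMod n × ZMod n) → (ZMod n × ZMod n) × (ZMod n × ZMod n))
    (hr : ∀ x y : ZMod n × ZMod n,
      (r (x, y)).1 = σ x y ∧ σ (σ x y) ((r (x, y)).2) = x) :
    IsYBSolution r ∧
    (IsIndecomposable r ↔ AddSubgroup.closure (Set.range J) = (⊤ : AddSubgroup (ZMod n))) ∧
    (IsIrretractable r ↔
      ∀ i i' : ZMod n, (∀ k : ZMod n, J (i + k) = J (i' + k)) → i = i') := by
  obtain rfl : r = asymR J := eq_asymR J hσ hr
  exact ⟨isYBSolution_asymR hsym, isIndecomposable_asymR_iff J, isIrretractable_asymR_iff J⟩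

/-- Proposition `ind`: for `σ_{(i,j)}(k,l) = (k + j, l − j_{k+j−i})`
with `j_i = j_{−i}`, `(X,r)` is a solution of the YBE; it is indecomposable iff
the `j_i` generate `(ℤ/(n),+)`, and irretractable iff the rows of the associated
circulant matrix are pairwise distinct. -/
theorem asymmetric_product_solution_indecomposable_irretractable_iff
    (n : ℕ) (hn : 1 < n) (J : ZMod n → ZMod n)
    (hsym : ∀ i : ZMod n, J (-i) = J i)
    (σ : ZMod n × ZMod n → ZMod n × ZMod n → ZMod n × ZMod n)
    (hσ : ∀ i j k l : ZMod n, σ (i, j) (k, l) = (k + j, l - J (k + j - i)))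
    (r : (ZMod n × ZMod n) × (ZMod n × ZMod n) → (ZMod n × ZMod n) × (ZMod n × ZMod n))
    (hr : ∀ x y : ZMod n × ZMod n,
      (r (x, y)).1 = σ x y ∧ σ (σ x y) ((r (x, y)).2) = x) :
    IsYBSolution r ∧
    (IsIndecomposable r ↔ AddSubgroup.closure (Set.range J) = (⊤ : AddSubgroup (ZMod n))) ∧
    (IsIrretractable r ↔
      ∀ i i' : ZMod n, (∀ k : ZMod n, J (i + k) = J (i' + k)) → i = i') :=
  asymmetric_product_solution_indecomposable_irretractable_iff_general n J hsym σ hσ r hr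
end

section
/- Let n > 1 be an integer and let a₀,…,a_{n−1}, c₀,…,c_{n−1} ∈ ℤ/(n) (indices read modulo n) satisfy a_i = a_{−i} and c_i = c_{−i} for all i ∈ ℤ/(n). Let X = (ℤ/(n))² and let r_a and r_c be the solutions of the YBE on X given by r_a((i,j),(k,l)) = (σᵃ_{(i,j)}(k,l), (σᵃ_{σᵃ_{(i,j)}(k,l)})⁻¹(i,j)) with σᵃ_{(i,j)}(k,l) = (k + j, l − a_{k+j−i}), and analogously r_c using the family c. If there exists an invertible element u ∈ ℤ/(n) such that u·a_i = c_{u·i} for all i ∈ ℤ/(n), then the solutions (X, r_a) and (X, r_c) are isomorphic; explicitly, the map h(i,j) = (u·i, u·j) is an isomorphism of solutions from (X, r_a) to (X, r_c). -/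
open Function

lemma isSolHom_of_sigma {X Y : Type*} {r : X × X → X × X} {s : Y × Y → Y × Y}
    {σ : X → X → X} {σ' : Y → Y → Y} {f : X → Y}
    (hr : ∀ x y, (r (x, y)).1 = σ x y) (hs : ∀ x y, (s (x, y)).1 = σ' x y)
    (hf : ∀ x y, f (σ x y) = σ' (f x) (f y)) : IsSolHom r s f := fun x y => by
  rw [hr, hs, hf]

section Twisted

variable {R : Type*} [CommRing R]

def twistedSigma (a : R → R) (x y : R × R) : R × R :=
  (y.1 + x.2, y.2 - a (y.1 + x.2 - x.1))

lemma smul_twistedSigma {a c : R → R} (u : R) (hu : ∀ i, u * a i = c (u * i)) (x y : R × R) :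
    u • twistedSigma a x y = twistedSigma c (u • x) (u • y) := by
  simp only [twistedSigma, Prod.smul_mk, Prod.smul_fst, Prod.smul_snd, smul_eq_mul, mul_add,
    mul_sub, hu]

end Twisted

theorem iso_of_scaling_general (n : ℕ)
    (a c : ZMod n → ZMod n)
    (σa σc : ZMod n × ZMod n → ZMod n × ZMod n → ZMod n × ZMod n)
    (hσa : ∀ i j k l : ZMod n, σa (i, j) (k, l) = (k + j, l - a (k + j - i)))
    (hσc : ∀ i j k l : ZMod n, σc (i, j) (k, l) = (k + j, l - c (k + j - i)))
    (ra rc : (ZMod n × ZMod n) × (ZMod n × ZMod n) → (ZMod n × ZMod n) × (ZMod n × ZMod n))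
    (hra : ∀ x y : ZMod n × ZMod n,
      (ra (x, y)).1 = σa x y ∧ σa (σa x y) ((ra (x, y)).2) = x)
    (hrc : ∀ x y : ZMod n × ZMod n,
      (rc (x, y)).1 = σc x y ∧ σc (σc x y) ((rc (x, y)).2) = x)
    (u : (ZMod n)ˣ)
    (hu : ∀ i : ZMod n, (u : ZMod n) * a i = c ((u : ZMod n) * i)) :
    Function.Bijective (fun x : ZMod n × ZMod n => ((u : ZMod n) * x.1, (u : ZMod n) * x.2)) ∧
    IsSolHom ra rc (fun x : ZMod n × ZMod n => ((u : ZMod n) * x.1, (u : ZMod n) * x.2)) := by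
  have hσa' : σa = twistedSigma a := funext₂ fun x y => hσa x.1 x.2 y.1 y.2
  have hσc' : σc = twistedSigma c := funext₂ fun x y => hσc x.1 x.2 y.1 y.2
  subst hσa' hσc'
  -- `x ↦ (u * x.1, u * x.2)` unfolds to the action `x ↦ u • x` of the unit `u` on `ZMod n × ZMod n`
  exact ⟨MulAction.bijective u, isSolHom_of_sigma (fun x y => (hra x y).1)
    (fun x y => (hrc x y).1) (smul_twistedSigma (u : ZMod n) hu)⟩

/-- Proposition `iso`, first part: if `u` is invertible in `ℤ/(n)`
and `u·a_i = c_{u·i}` for all `i`, then `h(i,j) = (u·i, u·j)` is an isomorphism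
of solutions from `(X, r_a)` to `(X, r_c)`. -/
theorem iso_of_scaling (n : ℕ) (hn : 1 < n)
    (a c : ZMod n → ZMod n)
    (hasym : ∀ i : ZMod n, a (-i) = a i)
    (hcsym : ∀ i : ZMod n, c (-i) = c i)
    (σa σc : ZMod n × ZMod n → ZMod n × ZMod n → ZMod n × ZMod n)
    (hσa : ∀ i j k l : ZMod n, σa (i, j) (k, l) = (k + j, l - a (k + j - i)))
    (hσc : ∀ i j k l : ZMod n, σc (i, j) (k, l) = (k + j, l - c (k + j - i)))
    (ra rc : (ZMod n × ZMod n) × (ZMod n × ZMod n) → (ZMod n × ZMod n) × (ZMod n × ZMod n))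
    (hra : ∀ x y : ZMod n × ZMod n,
      (ra (x, y)).1 = σa x y ∧ σa (σa x y) ((ra (x, y)).2) = x)
    (hrc : ∀ x y : ZMod n × ZMod n,
      (rc (x, y)).1 = σc x y ∧ σc (σc x y) ((rc (x, y)).2) = x)
    (u : (ZMod n)ˣ)
    (hu : ∀ i : ZMod n, (u : ZMod n) * a i = c ((u : ZMod n) * i)) :
    Function.Bijective (fun x : ZMod n × ZMod n => ((u : ZMod n) * x.1, (u : ZMod n) * x.2)) ∧
    IsSolHom ra rc (fun x : ZMod n × ZMod n => ((u : ZMod n) * x.1, (u : ZMod n) * x.2)) :=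
  iso_of_scaling_general n a c σa σc hσa hσc ra rc hra hrc u hu
end

section
/- Let n > 1 be an integer and let a₀,…,a_{n−1}, c₀,…,c_{n−1} ∈ ℤ/(n) (indices read modulo n) satisfy a_i = a_{−i} and c_i = c_{−i} for all i ∈ ℤ/(n). Let X = (ℤ/(n))² and let r_a and r_c be the solutions of the YBE on X given by r_a((i,j),(k,l)) = (σᵃ_{(i,j)}(k,l), (σᵃ_{σᵃ_{(i,j)}(k,l)})⁻¹(i,j)) with σᵃ_{(i,j)}(k,l) = (k + j, l − a_{k+j−i}), and analogously r_c using the family c. Suppose that the n×n circulant matrices A = (a_{k−i})_{i,k∈ℤ/(n)} and C = (c_{k−i})_{i,k∈ℤ/(n)} are both invertible over ℤ/(n) (equivalently, the associated bilinear forms are non-singular). If the solutions (X, r_a) and (X, r_c) are isomorphic, then there exists an invertible element u ∈ ℤ/(n) such that u·a_i = c_{u·i} for all i ∈ ℤ/(n). -/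
/-!
Write an isomorphism as `f = (F, G)`. Comparing first coordinates in
`f (σᵃ_x y) = σᶜ_{f x} (f y)` shows that `F (k + j, l) = F (k, l) + θ j` and
`G (i, j) = G (0, 0) + θ j` for an additive map `θ`, which is onto because `f` is.
An additive surjection of `ℤ/(n)` is multiplication by a unit `u`, and comparing second
coordinates at a well-chosen pair gives `θ (a s) = c (θ s)`.
-/

open Function

theorem ZMod.exists_unit_eq_mul_of_surjective {n : ℕ} (g : ZMod n →+ ZMod n)
    (hg : Surjective g) : ∃ u : (ZMod n)ˣ, ∀ x, g x = u * x := by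
  have hmul (x : ZMod n) : g x = g 1 * x := by simpa [mul_comm] using ZMod.map_smul g x 1
  obtain ⟨y, hy⟩ := hg 1
  have hunit : IsUnit (g 1) := IsUnit.of_mul_eq_one y ((hmul y).symm.trans hy)
  exact ⟨hunit.unit, hmul⟩

/-- The map `σᵃ_{(i,j)} (k,l) = (k + j, l - a (k + j - i))`. -/
def sigmaOf {M : Type*} [AddCommGroup M] (a : M → M) (x y : M × M) : M × M :=
  (y.1 + x.2, y.2 - a (y.1 + x.2 - x.1))

def IsSigmaHom {M : Type*} [AddCommGroup M] (a c : M → M) (f : M × M → M × M) : Prop :=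
  ∀ x y, f (sigmaOf a x y) = sigmaOf c (f x) (f y)

namespace IsSigmaHom

variable {M : Type*} [AddCommGroup M] {a c : M → M} {f : M × M → M × M}

def shift (f : M × M → M × M) (j : M) : M := (f (0, j)).2 - (f (0, 0)).2

theorem fst_apply_sigmaOf (hf : IsSigmaHom a c f) (i j k l : M) :
    (f (k + j, l - a (k + j - i))).1 = (f (k, l)).1 + (f (i, j)).2 :=
  congrArg Prod.fst (hf (i, j) (k, l))

theorem snd_apply_sigmaOf (hf : IsSigmaHom a c f) (i j k l : M) :
    (f (k + j, l - a (k + j - i))).2 =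
      (f (k, l)).2 - c ((f (k, l)).1 + (f (i, j)).2 - (f (i, j)).1) :=
  congrArg Prod.snd (hf (i, j) (k, l))

theorem fst_apply_sub (hf : IsSigmaHom a c f) (i k l : M) :
    (f (k, l - a (k - i))).1 = (f (k, l)).1 + (f (i, 0)).2 := by
  simpa using hf.fst_apply_sigmaOf i 0 k l

theorem fst_add_snd_zero (hf : IsSigmaHom a c f) (i j k l : M) :
    (f (k + j, l)).1 + (f (i, 0)).2 = (f (k, l)).1 + (f (i, j)).2 := by
  linear_combination (norm := abel_nf)
    hf.fst_apply_sigmaOf i j k l - hf.fst_apply_sub i (k + j) l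

theorem fst_add_left (hf : IsSigmaHom a c f) (j k l : M) :
    (f (k + j, l)).1 = (f (k, l)).1 + shift f j := by
  unfold shift
  linear_combination (norm := abel_nf) hf.fst_add_snd_zero 0 j k l

theorem snd_zero_eq (hf : IsSigmaHom a c f) (i : M) : (f (i, 0)).2 = (f (0, 0)).2 := by
  linear_combination (norm := abel_nf) hf.fst_apply_sub 0 0 0 - hf.fst_apply_sub i i 0
    + hf.fst_add_left i 0 (0 - a 0) - hf.fst_add_left i 0 0

theorem snd_apply (hf : IsSigmaHom a c f) (i j : M) :
    (f (i, j)).2 = (f (0, 0)).2 + shift f j := by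
  linear_combination (norm := abel_nf)
    hf.snd_zero_eq i + hf.fst_add_left j 0 0 - hf.fst_add_snd_zero i j 0 0

theorem shift_add (hf : IsSigmaHom a c f) (x y : M) :
    shift f (x + y) = shift f x + shift f y := by
  linear_combination (norm := abel_nf)
    hf.fst_add_left y x 0 + hf.fst_add_left x 0 0 - hf.fst_add_left (x + y) 0 0

def shiftHom (hf : IsSigmaHom a c f) : M →+ M := AddMonoidHom.mk' (shift f) hf.shift_add

theorem shiftHom_apply (hf : IsSigmaHom a c f) (j : M) : hf.shiftHom j = shift f j := rfl

theorem shiftHom_surjective (hf : IsSigmaHom a c f) (hsurj : Surjective f) :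
    Surjective hf.shiftHom := by
  intro y
  obtain ⟨⟨i, j⟩, hij⟩ := hsurj (0, (f (0, 0)).2 + y)
  refine ⟨j, ?_⟩
  have h := hf.snd_apply i j
  rw [hij] at h
  simpa [shiftHom_apply] using h.symm

theorem shiftHom_comp (hf : IsSigmaHom a c f) (s : M) :
    hf.shiftHom (a s) = c (hf.shiftHom s) := by
  have hzero : shift f 0 = 0 := sub_self _
  have hneg (x : M) : shift f (-x) = -shift f x := map_neg hf.shiftHom x
  -- `j = -a 0` is the choice for which the `F`-terms in the argument of `c` cancel.
  have h := hf.snd_apply_sigmaOf 0 (-a 0) (s + a 0) 0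
  rw [add_neg_cancel_right, sub_zero, zero_sub] at h
  have harg : (f (s + a 0, 0)).1 + (f (0, -a 0)).2 - (f (0, -a 0)).1 = shift f s := by
    linear_combination (norm := abel_nf) hf.fst_add_left (s + a 0) 0 0 + hf.snd_apply 0 (-a 0)
      - hf.fst_apply_sub 0 0 0 + hf.shift_add s (a 0) + hneg (a 0)
  rw [harg, hf.snd_apply s, hf.snd_apply (s + a 0), hneg] at h
  simp only [shiftHom_apply]
  linear_combination (norm := abel_nf) -h - hzero

end IsSigmaHom

theorem scaling_of_iso_general (n : ℕ)
    (a c : ZMod n → ZMod n)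
    (σa σc : ZMod n × ZMod n → ZMod n × ZMod n → ZMod n × ZMod n)
    (hσa : ∀ i j k l : ZMod n, σa (i, j) (k, l) = (k + j, l - a (k + j - i)))
    (hσc : ∀ i j k l : ZMod n, σc (i, j) (k, l) = (k + j, l - c (k + j - i)))
    (ra rc : (ZMod n × ZMod n) × (ZMod n × ZMod n) → (ZMod n × ZMod n) × (ZMod n × ZMod n))
    (hra : ∀ x y : ZMod n × ZMod n,
      (ra (x, y)).1 = σa x y ∧ σa (σa x y) ((ra (x, y)).2) = x)
    (hrc : ∀ x y : ZMod n × ZMod n,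
      (rc (x, y)).1 = σc x y ∧ σc (σc x y) ((rc (x, y)).2) = x)
    (hiso : ∃ f : ZMod n × ZMod n → ZMod n × ZMod n,
      Function.Bijective f ∧ IsSolHom ra rc f) :
    ∃ u : (ZMod n)ˣ, ∀ i : ZMod n, (u : ZMod n) * a i = c ((u : ZMod n) * i) := by
  obtain ⟨f, hf_bij, hf_hom⟩ := hiso
  have hσa' : σa = sigmaOf a := by
    funext ⟨i, j⟩ ⟨k, l⟩
    exact hσa i j k l
  have hσc' : σc = sigmaOf c := by
    funext ⟨i, j⟩ ⟨k, l⟩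
    exact hσc i j k l
  have hf : IsSigmaHom a c f := fun x y => by
    simpa only [(hra x y).1, (hrc (f x) (f y)).1, hσa', hσc'] using hf_hom x y
  obtain ⟨u, hu⟩ :=
    ZMod.exists_unit_eq_mul_of_surjective hf.shiftHom (hf.shiftHom_surjective hf_bij.2)
  exact ⟨u, fun i => by rw [← hu, ← hu, hf.shiftHom_comp]⟩

/-- Proposition `iso`, converse: if the circulant matrices
associated with `a` and `c` are invertible over `ℤ/(n)` and the solutions
`(X, r_a)` and `(X, r_c)` are isomorphic, then there is an invertible `u` with
`u·a_i = c_{u·i}` for all `i`. -/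
theorem scaling_of_iso (n : ℕ) (hn : 1 < n) [NeZero n]
    (a c : ZMod n → ZMod n)
    (hasym : ∀ i : ZMod n, a (-i) = a i)
    (hcsym : ∀ i : ZMod n, c (-i) = c i)
    (hA : IsUnit (Matrix.det (Matrix.of fun i k : ZMod n => a (k - i))))
    (hC : IsUnit (Matrix.det (Matrix.of fun i k : ZMod n => c (k - i))))
    (σa σc : ZMod n × ZMod n → ZMod n × ZMod n → ZMod n × ZMod n)
    (hσa : ∀ i j k l : ZMod n, σa (i, j) (k, l) = (k + j, l - a (k + j - i)))
    (hσc : ∀ i j k l : ZMod n, σc (i, j) (k, l) = (k + j, l - c (k + j - i)))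
    (ra rc : (ZMod n × ZMod n) × (ZMod n × ZMod n) → (ZMod n × ZMod n) × (ZMod n × ZMod n))
    (hra : ∀ x y : ZMod n × ZMod n,
      (ra (x, y)).1 = σa x y ∧ σa (σa x y) ((ra (x, y)).2) = x)
    (hrc : ∀ x y : ZMod n × ZMod n,
      (rc (x, y)).1 = σc x y ∧ σc (σc x y) ((rc (x, y)).2) = x)
    (hiso : ∃ f : ZMod n × ZMod n → ZMod n × ZMod n,
      Function.Bijective f ∧ IsSolHom ra rc f) :
    ∃ u : (ZMod n)ˣ, ∀ i : ZMod n, (u : ZMod n) * a i = c ((u : ZMod n) * i) :=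
  scaling_of_iso_general n a c σa σc hσa hσc ra rc hra hrc hiso
end

section
/- Let p be a prime number, let X = ℤ/(p) × ℤ/(p), and let (X,r) be an indecomposable and irretractable solution of the YBE such that r((i,j),(k,l)) = (σ_{(i,j)}(k,l), σ_{σ_{(i,j)}(k,l)}⁻¹(i,j)) with σ_{(i,j)}(k,l) = (σ_j(k), d_{i,σ_j(k)}(l)) for some families of permutations σ_j and d_{i,k} of ℤ/(p). Let F = ⟨σ_j : j ∈ ℤ/(p)⟩ ≤ Sym(ℤ/(p)) and W = ⟨d_{i,k} : i,k ∈ ℤ/(p)⟩ ≤ Sym(ℤ/(p)). Then F contains a normal subgroup A of order p that acts transitively on ℤ/(p), the quotient F/A is cyclic of order not divisible by p, and likewise W contains a normal subgroup A' of order p that acts transitively on ℤ/(p) with W/A' cyclic of order not divisible by p. -/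
open Function

open Equiv MulAction Multiplicative

/-!
The braid relation gives `σ_j σ_l = σ_{d_{i,a} l} σ_{d_{a,i}⁻¹ j}`. Hence conjugation by `σ_l`
permutes the elements `σ_a⁻¹ σ_b`, in the same way for every `l`, so `K = ⟨σ_a⁻¹ σ_b⟩` is an
abelian subgroup normalised by `F`. As `F` is transitive on `p` points, `K` is transitive, hence
regular of order `p`. Identifying `K` with `ℤ/(p)`, the group `F` acts by affine maps
`x ↦ s x + t` in the orbit coordinate of `K`, and writing `σ_l = σ_0 κ_l` with `κ_l ∈ K` turns the
braid relation into `κ_{d_{i,a} l} = s κ_l + t`, so `W` is affine in the coordinate `l ↦ κ_l`.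
A transitive group of affine maps of `ℤ/(p)` has the required shape: the kernel of the linear
part consists of translations, has order `p` because `p` divides the group order but not
`p - 1`, and the quotient embeds in the cyclic group `(ℤ/(p))ˣ`.
-/

section PrimeDegree

variable {G X : Type*} [Group G] [MulAction G X]

theorem card_eq_card_of_isPretransitive_of_free [Nonempty X] [IsPretransitive G X]
    (hfree : ∀ (g : G) (x : X), g • x = x → g = 1) : Nat.card G = Nat.card X := by
  obtain ⟨x⟩ := ‹Nonempty X›
  have hstab : stabilizer G x = ⊥ := (Subgroup.eq_bot_iff_forall _).2 fun g hg => hfree g x hg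
  rw [← index_stabilizer_of_transitive G x, hstab, Subgroup.index_bot]

theorem isPretransitive_of_normal_of_prime_card [IsPretransitive G X] (hX : (Nat.card X).Prime)
    (N : Subgroup G) [N.Normal] (hN : ∃ (n : N) (x : X), n • x ≠ x) : IsPretransitive N X := by
  have := IsPreprimitive.of_prime_card (G := G) hX
  obtain ⟨n, x, hnx⟩ := hN
  exact IsQuasiPreprimitive.isPretransitive_of_normal fun h =>
    hnx ((Set.eq_univ_iff_forall.1 h x) n)

end PrimeDegree

section PermSubgroup

variable {X : Type*}

theorem eq_one_of_apply_eq_self_of_commute (K : Subgroup (Perm X)) [IsPretransitive K X]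
    (hK : ∀ a ∈ K, ∀ b ∈ K, a * b = b * a) {k : Perm X} (hk : k ∈ K) {x : X} (hx : k x = x) :
    k = 1 := by
  ext y
  obtain ⟨g, rfl⟩ := exists_smul_eq K x y
  change k (g.1 x) = g.1 x
  rw [← Perm.mul_apply, hK k hk g.1 g.2, Perm.mul_apply, hx]

theorem isPretransitive_of_le_normalizer (hX : (Nat.card X).Prime) {F K : Subgroup (Perm X)}
    [IsPretransitive F X] (hKF : K ≤ F) (hFK : F ≤ Subgroup.normalizer (K : Set (Perm X)))
    (hK : K ≠ ⊥) : IsPretransitive K X := by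
  have := (Subgroup.normal_subgroupOf_iff_le_normalizer hKF).2 hFK
  obtain ⟨k, hk⟩ := Subgroup.ne_bot_iff_exists_ne_one.1 hK
  obtain ⟨x, hx⟩ : ∃ x, (k : Perm X) x ≠ x := by
    by_contra! h
    exact hk (Subtype.ext (Perm.ext h))
  have := isPretransitive_of_normal_of_prime_card hX (K.subgroupOf F) ⟨⟨⟨k, hKF k.2⟩, k.2⟩, x, hx⟩
  refine ⟨fun x y => ?_⟩
  obtain ⟨n, hn⟩ := exists_smul_eq (K.subgroupOf F) x y
  exact ⟨⟨n.1.1, n.2⟩, hn⟩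

end PermSubgroup

section Affine

variable {X : Type*} {p : ℕ}

def affineSubgroup (m : X ≃ ZMod p) : Subgroup (Perm X) where
  carrier := {g | ∃ (s : (ZMod p)ˣ) (t : ZMod p), ∀ x, m (g x) = s * m x + t}
  one_mem' := ⟨1, 0, fun x => by simp⟩
  mul_mem' := by
    rintro g h ⟨s, t, hg⟩ ⟨s', t', hh⟩
    exact ⟨s * s', s * t' + t, fun x => by simp only [Perm.mul_apply, hg, hh, Units.val_mul]; ring⟩
  inv_mem' := by
    rintro g ⟨s, t, hg⟩
    refine ⟨s⁻¹, -(s⁻¹ * t : ZMod p), fun x => ?_⟩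
    have h := hg (g⁻¹ x)
    rw [show g (g⁻¹ x) = x from g.apply_symm_apply x] at h
    rw [h, mul_add, ← mul_assoc, ← Units.val_mul, inv_mul_cancel, Units.val_one]
    ring

/-- The linear part `s` of `x ↦ s x + t`, read off as the image of `1` minus the image of `0`. -/
def linearPart (m : X ≃ ZMod p) : affineSubgroup m →* (ZMod p)ˣ := MonoidHom.toHomUnits
  { toFun := fun g => m (g.1 (m.symm 1)) - m (g.1 (m.symm 0))
    map_one' := by simp
    map_mul' := by
      rintro ⟨g, s, t, hg⟩ ⟨h, s', t', hh⟩
      simp only [Subgroup.coe_mul, Perm.mul_apply, hg, hh, Equiv.apply_symm_apply]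
      ring }

theorem apply_eq_linearPart_mul_add (m : X ≃ ZMod p) (g : affineSubgroup m) (x : X) :
    m (g.1 x) = linearPart m g * m x + m (g.1 (m.symm 0)) := by
  obtain ⟨g, s, t, hg⟩ := g
  simp only [linearPart, MonoidHom.coe_toHomUnits, MonoidHom.coe_mk, OneHom.coe_mk, hg,
    Equiv.apply_symm_apply]
  ring

theorem eq_one_of_linearPart_eq_one (m : X ≃ ZMod p) {g : affineSubgroup m}
    (hg : linearPart m g = 1) {x : X} (hx : g.1 x = x) : g = 1 := by
  have hx' := apply_eq_linearPart_mul_add m g x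
  rw [hg, hx, Units.val_one, one_mul, left_eq_add] at hx'
  ext y
  apply m.injective
  simpa [hg, hx'] using apply_eq_linearPart_mul_add m g y

theorem isCyclic_and_not_dvd_card_quotient_ker [Fact p.Prime] {G : Type*} [Group G]
    (χ : G →* (ZMod p)ˣ) : IsCyclic (G ⧸ χ.ker) ∧ ¬ p ∣ Nat.card (G ⧸ χ.ker) := by
  let e := QuotientGroup.quotientKerEquivRange χ
  refine ⟨isCyclic_of_surjective e.symm.toMonoidHom e.symm.surjective, fun h => ?_⟩
  have hdvd : Nat.card (G ⧸ χ.ker) ∣ p - 1 := by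
    rw [Nat.card_congr e.toEquiv, ← ZMod.card_units p, ← Nat.card_eq_fintype_card]
    exact Subgroup.card_subgroup_dvd_card _
  have hp := (Fact.out : p.Prime).one_lt
  have := Nat.le_of_dvd (Nat.sub_pos_of_lt hp) (h.trans hdvd)
  omega

theorem exists_normal_transitive_of_le_affineSubgroup [Fact p.Prime] (m : X ≃ ZMod p)
    (G : Subgroup (Perm X)) (hG : G ≤ affineSubgroup m) [IsPretransitive G X] :
    ∃ A : Subgroup G, ∃ hA : A.Normal, Nat.card A = p ∧
      (∀ x y : X, ∃ g : G, g ∈ A ∧ (g : Perm X) x = y) ∧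
      (haveI := hA; IsCyclic (G ⧸ A)) ∧ ¬ p ∣ Nat.card (G ⧸ A) := by
  have hp : p.Prime := Fact.out
  have : Nonempty X := ⟨m.symm 0⟩
  have hX : Nat.card X = p := (Nat.card_congr m).trans (Nat.card_zmod p)
  let χ := (linearPart m).comp (Subgroup.inclusion hG)
  obtain ⟨hcyclic, hcoprime⟩ := isCyclic_and_not_dvd_card_quotient_ker χ
  have hpA : p ∣ Nat.card χ.ker := by
    have hpG : p ∣ Nat.card G :=
      hX ▸ index_stabilizer_of_transitive G (m.symm 0) ▸ Subgroup.index_dvd_card _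
    rw [Subgroup.card_eq_card_quotient_mul_card_subgroup χ.ker] at hpG
    exact (hp.dvd_mul.1 hpG).resolve_left hcoprime
  have hfree : ∀ (a : χ.ker) (x : X), a • x = x → a = 1 := fun a x h => by
    have := congrArg Subtype.val (eq_one_of_linearPart_eq_one m a.2 h)
    exact Subtype.ext (Subtype.ext this)
  obtain ⟨a, ha⟩ := Subgroup.ne_bot_iff_exists_ne_one.1 fun h : χ.ker = ⊥ =>
    hp.ne_one (Nat.dvd_one.1 (by rwa [h, Subgroup.card_bot] at hpA))
  have := isPretransitive_of_normal_of_prime_card (hX ▸ hp) χ.ker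
    ⟨a, m.symm 0, fun h => ha (hfree a _ h)⟩
  refine ⟨χ.ker, inferInstance, (card_eq_card_of_isPretransitive_of_free hfree).trans hX,
    fun x y => ?_, hcyclic, hcoprime⟩
  obtain ⟨a, ha⟩ := exists_smul_eq χ.ker x y
  exact ⟨a, a.2, ha⟩

end Affine

section DiffSubgroup

variable {X : Type*} {σ : X → Perm X} {w : Perm X}

variable (σ) in
def diffSubgroup : Subgroup (Perm X) :=
  Subgroup.closure {g | ∃ a b, (σ a)⁻¹ * σ b = g}

theorem inv_mul_mem_diffSubgroup (a b : X) : (σ a)⁻¹ * σ b ∈ diffSubgroup σ :=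
  Subgroup.subset_closure ⟨a, b, rfl⟩

theorem diffSubgroup_le_closure_range : diffSubgroup σ ≤ Subgroup.closure (Set.range σ) :=
  (Subgroup.closure_le _).2 fun _ ⟨a, b, h⟩ =>
    h ▸ mul_mem (inv_mem (Subgroup.subset_closure ⟨a, rfl⟩)) (Subgroup.subset_closure ⟨b, rfl⟩)

theorem conj_inv_mul_eq (hR : ∀ j l, σ j * σ l = σ (w l) * σ (w⁻¹ j)) (a b l : X) :
    (σ l)⁻¹ * ((σ a)⁻¹ * σ b) * σ l = (σ (w⁻¹ a))⁻¹ * σ (w⁻¹ b) :=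
  calc (σ l)⁻¹ * ((σ a)⁻¹ * σ b) * σ l = (σ a * σ l)⁻¹ * (σ b * σ l) := by group
    _ = (σ (w⁻¹ a))⁻¹ * σ (w⁻¹ b) := by rw [hR a l, hR b l]; group

theorem closure_range_le_normalizer_diffSubgroup [Finite X]
    (hR : ∀ j l, σ j * σ l = σ (w l) * σ (w⁻¹ j)) :
    Subgroup.closure (Set.range σ) ≤ Subgroup.normalizer (diffSubgroup σ : Set (Perm X)) := by
  rw [Subgroup.closure_le]
  rintro _ ⟨l, rfl⟩
  apply Subgroup.normalizer_le_normalizer_closure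
  apply Subgroup.mem_normalizer_fintype
  rintro _ ⟨a, b, rfl⟩
  refine ⟨w a, w b, ?_⟩
  have h := conj_inv_mul_eq hR (w a) (w b) l
  simp only [Perm.coe_inv, Equiv.symm_apply_apply] at h
  rw [← h]
  group

/-- Conjugation by `σ l` acts on `diffSubgroup σ` independently of `l`. -/
theorem diffSubgroup_le_centralizer (hR : ∀ j l, σ j * σ l = σ (w l) * σ (w⁻¹ j)) :
    diffSubgroup σ ≤ Subgroup.centralizer (Set.range fun q : X × X => σ q.1 * (σ q.2)⁻¹) := by
  rw [diffSubgroup, Subgroup.closure_le]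
  rintro _ ⟨a, b, rfl⟩ _ ⟨⟨l', l⟩, rfl⟩
  have h := (conj_inv_mul_eq hR a b l).trans (conj_inv_mul_eq hR a b l').symm
  calc σ l' * (σ l)⁻¹ * ((σ a)⁻¹ * σ b)
      = σ l' * ((σ l)⁻¹ * ((σ a)⁻¹ * σ b) * σ l) * (σ l)⁻¹ := by group
    _ = σ l' * ((σ l')⁻¹ * ((σ a)⁻¹ * σ b) * σ l') * (σ l)⁻¹ := by rw [h]
    _ = (σ a)⁻¹ * σ b * (σ l' * (σ l)⁻¹) := by group

theorem mul_comm_of_mem_diffSubgroup [Finite X] (hR : ∀ j l, σ j * σ l = σ (w l) * σ (w⁻¹ j))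
    {x y : Perm X} (hx : x ∈ diffSubgroup σ) (hy : y ∈ diffSubgroup σ) : x * y = y * x := by
  suffices diffSubgroup σ ≤ Subgroup.centralizer {y} from
    Subgroup.mem_centralizer_singleton_iff.1 (this hx)
  rw [diffSubgroup, Subgroup.closure_le]
  rintro _ ⟨a, b, rfl⟩
  rw [SetLike.mem_coe, Subgroup.mem_centralizer_singleton_iff]
  have hy' : σ a * y * (σ a)⁻¹ ∈ diffSubgroup σ :=
    (closure_range_le_normalizer_diffSubgroup hR (Subgroup.subset_closure ⟨a, rfl⟩) y).1 hy
  have h := diffSubgroup_le_centralizer hR hy' _ ⟨(b, a), rfl⟩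
  calc (σ a)⁻¹ * σ b * y
      = (σ a)⁻¹ * (σ b * (σ a)⁻¹ * (σ a * y * (σ a)⁻¹)) * σ a := by group
    _ = (σ a)⁻¹ * ((σ a * y * (σ a)⁻¹) * (σ b * (σ a)⁻¹)) * σ a := by rw [h]
    _ = y * ((σ a)⁻¹ * σ b) := by group

theorem isPretransitive_diffSubgroup (hR : ∀ j l, σ j * σ l = σ (w l) * σ (w⁻¹ j))
    (hσ : Injective σ) (hX : (Nat.card X).Prime)
    [IsPretransitive (Subgroup.closure (Set.range σ)) X] : IsPretransitive (diffSubgroup σ) X := by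
  have : Finite X := Nat.finite_of_card_ne_zero hX.ne_zero
  have : Nontrivial X := Finite.one_lt_card_iff_nontrivial.1 hX.one_lt
  obtain ⟨a, b, hab⟩ := exists_pair_ne X
  refine isPretransitive_of_le_normalizer hX diffSubgroup_le_closure_range
    (closure_range_le_normalizer_diffSubgroup hR) ?_
  rw [Subgroup.ne_bot_iff_exists_ne_one]
  refine ⟨⟨_, inv_mul_mem_diffSubgroup a b⟩, fun h => hab (hσ ?_)⟩
  exact inv_mul_eq_one.1 (congrArg Subtype.val h)

theorem card_diffSubgroup (hR : ∀ j l, σ j * σ l = σ (w l) * σ (w⁻¹ j)) (hσ : Injective σ)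
    (hX : (Nat.card X).Prime) [IsPretransitive (Subgroup.closure (Set.range σ)) X] :
    Nat.card (diffSubgroup σ) = Nat.card X := by
  have : Finite X := Nat.finite_of_card_ne_zero hX.ne_zero
  have : Nonempty X := (Nat.card_ne_zero.1 hX.ne_zero).1
  have := isPretransitive_diffSubgroup hR hσ hX
  exact card_eq_card_of_isPretransitive_of_free fun k x hx => Subtype.ext <|
    eq_one_of_apply_eq_self_of_commute _
      (fun _ ha _ hb => mul_comm_of_mem_diffSubgroup hR ha hb) k.2 hx

end DiffSubgroup

section Coordinates

variable {p : ℕ} [Fact p.Prime]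

theorem exists_injective_range_eq {G : Type*} [Group G] (K : Subgroup G) (hK : Nat.card K = p) :
    ∃ τ : Multiplicative (ZMod p) →* G, Injective τ ∧ τ.range = K := by
  let e : Multiplicative (ZMod p) ≃* K := mulEquivOfPrimeCardEq (by simp) hK
  refine ⟨K.subtype.comp e.toMonoidHom, K.subtype_injective.comp e.injective, ?_⟩
  rw [MonoidHom.range_comp, MonoidHom.range_eq_top.2 e.surjective, ← MonoidHom.range_eq_map,
    K.range_subtype]

theorem exists_conj_eq_of_mem_normalizer {G : Type*} [Group G]
    {τ : Multiplicative (ZMod p) →* G} (hτ : Injective τ) {g : G}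
    (hg : g ∈ Subgroup.normalizer (τ.range : Set G)) :
    ∃ c : (ZMod p)ˣ, ∀ t : ZMod p, g * τ (ofAdd t) * g⁻¹ = τ (ofAdd (c * t)) := by
  obtain ⟨c, hc⟩ : g * τ (ofAdd 1) * g⁻¹ ∈ τ.range := (hg _).1 ⟨_, rfl⟩
  have hc0 : toAdd c ≠ 0 := by
    intro h0
    rw [← ofAdd_toAdd c, h0, ofAdd_zero, map_one, eq_comm, conj_eq_one_iff, ← map_one τ] at hc
    exact one_ne_zero (ofAdd.injective (hτ hc))
  refine ⟨Units.mk0 _ hc0, fun t => ?_⟩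
  have ht : ofAdd t = ofAdd (1 : ZMod p) ^ t.val := by
    rw [← ofAdd_nsmul, nsmul_one, ZMod.natCast_zmod_val]
  rw [ht, map_pow, ← conj_pow, ← hc, ← map_pow]
  congr 1
  apply toAdd.injective
  simp [mul_comm]

theorem exists_normalizer_le_affineSubgroup {X : Type*} (hX : Nat.card X = p)
    (K : Subgroup (Perm X)) [IsPretransitive K X] (hK : Nat.card K = p) :
    ∃ m : X ≃ ZMod p, Subgroup.normalizer (K : Set (Perm X)) ≤ affineSubgroup m := by
  obtain ⟨τ, hτ, rfl⟩ := exists_injective_range_eq K hK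
  obtain ⟨x₀⟩ : Nonempty X := (Nat.card_ne_zero.1 (hX ▸ (Fact.out : p.Prime).ne_zero)).1
  have hsurj : Surjective fun t : ZMod p => τ (ofAdd t) x₀ := fun x => by
    obtain ⟨⟨_, t, rfl⟩, ht⟩ := exists_smul_eq τ.range x₀ x
    exact ⟨toAdd t, ht⟩
  let e := Equiv.ofBijective _ (hsurj.bijective_of_nat_card_le (by rw [Nat.card_zmod, hX]))
  refine ⟨e.symm, fun g hg => ?_⟩
  obtain ⟨c, hc⟩ := exists_conj_eq_of_mem_normalizer hτ hg
  refine ⟨c, e.symm (g x₀), fun x => ?_⟩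
  obtain ⟨s, rfl⟩ := e.surjective x
  have hb : τ (ofAdd (e.symm (g x₀))) x₀ = g x₀ := e.apply_symm_apply (g x₀)
  rw [e.symm_apply_apply, e.symm_apply_eq]
  change g (τ (ofAdd s) x₀) = τ (ofAdd (c * s + e.symm (g x₀))) x₀
  rw [ofAdd_add, map_mul, Perm.mul_apply, hb, ← hc s]
  simp

theorem exists_closure_le_affineSubgroup {X Y : Type*} (hY : Nat.card Y = p)
    (K : Subgroup (Perm X)) (hK : Nat.card K = p) {σ : Y → Perm X} (hσ : Injective σ) (b : Y)
    (hσK : ∀ l, (σ b)⁻¹ * σ l ∈ K) (hb : σ b ∈ Subgroup.normalizer (K : Set (Perm X)))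
    (D : Set (Perm Y)) (hD : ∀ δ ∈ D, ∃ c, ∀ l, σ b * σ l = σ (δ l) * σ c) :
    ∃ m : Y ≃ ZMod p, Subgroup.closure D ≤ affineSubgroup m := by
  obtain ⟨τ, hτ, rfl⟩ := exists_injective_range_eq K hK
  choose f hf using hσK
  have hinj : Injective fun l => toAdd (f l) := fun l l' h => hσ <| by
    simpa [hf] using congrArg (fun t => σ b * τ (ofAdd t)) h
  let m := Equiv.ofBijective _ (hinj.bijective_of_nat_card_le (by rw [Nat.card_zmod, hY]))
  have hm : ∀ l, σ l = σ b * τ (ofAdd (m l)) := fun l => by simp [m, hf]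
  obtain ⟨u, hu⟩ := exists_conj_eq_of_mem_normalizer hτ hb
  refine ⟨m, (Subgroup.closure_le _).2 fun δ hδ => ?_⟩
  obtain ⟨c, hc⟩ := hD δ hδ
  refine ⟨u, -(u * m c), fun l => ?_⟩
  have h := hc l
  rw [hm l, hm (δ l), hm c] at h
  have key : τ (ofAdd (u * m l)) = τ (ofAdd (m (δ l) + u * m c)) := by
    rw [← hu, ofAdd_add, map_mul, ← hu]
    calc σ b * τ (ofAdd (m l)) * (σ b)⁻¹
        = (σ b)⁻¹ * (σ b * (σ b * τ (ofAdd (m l)))) * (σ b)⁻¹ := by group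
      _ = (σ b)⁻¹ * (σ b * τ (ofAdd (m (δ l))) * (σ b * τ (ofAdd (m c)))) * (σ b)⁻¹ := by rw [h]
      _ = τ (ofAdd (m (δ l))) * (σ b * τ (ofAdd (m c)) * (σ b)⁻¹) := by group
  linear_combination -ofAdd.injective (hτ key)

end Coordinates

section Wreath

variable {X Y : Type*}

def wreathSubgroup (F : Subgroup (Perm X)) (W : Subgroup (Perm Y)) : Subgroup (Perm (X × Y)) where
  carrier := {g | ∃ f ∈ F, ∀ k, ∃ w ∈ W, ∀ l, g (k, l) = (f k, w l)}
  one_mem' := ⟨1, F.one_mem, fun _ => ⟨1, W.one_mem, fun _ => rfl⟩⟩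
  mul_mem' := by
    rintro g h ⟨f, hf, hg⟩ ⟨f', hf', hh⟩
    refine ⟨f * f', F.mul_mem hf hf', fun k => ?_⟩
    obtain ⟨w', hw', hw'l⟩ := hh k
    obtain ⟨w, hw, hwl⟩ := hg (f' k)
    exact ⟨w * w', W.mul_mem hw hw', fun l => by simp [hw'l, hwl]⟩
  inv_mem' := by
    rintro g ⟨f, hf, hg⟩
    refine ⟨f⁻¹, F.inv_mem hf, fun k => ?_⟩
    obtain ⟨w, hw, hwl⟩ := hg (f⁻¹ k)
    refine ⟨w⁻¹, W.inv_mem hw, fun l => ?_⟩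
    rw [Perm.inv_eq_iff_eq, hwl]
    simp

theorem isPretransitive_of_le_wreathSubgroup [Nonempty X] [Nonempty Y] {F : Subgroup (Perm X)}
    {W : Subgroup (Perm Y)} {H : Subgroup (Perm (X × Y))} (hHFW : H ≤ wreathSubgroup F W)
    (hH : ∀ x y, ∃ g ∈ H, g x = y) : IsPretransitive F X ∧ IsPretransitive W Y := by
  obtain ⟨x₀⟩ := ‹Nonempty X›
  obtain ⟨y₀⟩ := ‹Nonempty Y›
  constructor
  · refine ⟨fun x x' => ?_⟩
    obtain ⟨g, hg, hgx⟩ := hH (x, y₀) (x', y₀)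
    obtain ⟨f, hf, hk⟩ := hHFW hg
    obtain ⟨w, -, hwl⟩ := hk x
    exact ⟨⟨f, hf⟩, congrArg Prod.fst ((hwl y₀).symm.trans hgx)⟩
  · refine ⟨fun y y' => ?_⟩
    obtain ⟨g, hg, hgy⟩ := hH (x₀, y) (x₀, y')
    obtain ⟨f, -, hk⟩ := hHFW hg
    obtain ⟨w, hw, hwl⟩ := hk x₀
    exact ⟨⟨w, hw⟩, congrArg Prod.snd ((hwl y).symm.trans hgy)⟩

end Wreath

section ProductMap

variable {Y : Type*} {σ : Y → Perm Y} {d : Y → Y → Perm Y}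

/-- The solution `r(x, y) = (σ_x y, σ_{σ_x y}⁻¹ x)` on `Y × Y` with
`σ_{(i,j)}(k,l) = (σ_j k, d_{i,σ_j k} l)`. -/
def productMap (σ : Y → Perm Y) (d : Y → Y → Perm Y) : (Y × Y) × (Y × Y) → (Y × Y) × (Y × Y) :=
  fun ⟨⟨i, j⟩, k, l⟩ => ((σ j k, d i (σ j k) l), ((σ (d i (σ j k) l))⁻¹ i, (d (σ j k) i)⁻¹ j))

theorem injective_of_isIrretractable_productMap (h : IsIrretractable (productMap σ d)) :
    Injective σ := fun a b hab =>
  (Prod.ext_iff.1 (h (a, a) (a, b) fun _ => by simp [productMap, hab])).2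

theorem mul_eq_mul_of_isYBSolution_productMap (h : IsYBSolution (productMap σ d)) (i a j l : Y) :
    σ j * σ l = σ (d i a l) * σ ((d a i)⁻¹ j) := by
  ext m
  have := congrFun h.braid ((i, j), ((σ j)⁻¹ a, l), (m, m))
  simp only [comp_apply, yb12, yb23, productMap, Perm.coe_inv, Equiv.apply_symm_apply,
    Prod.mk.injEq] at this
  exact this.1.1.symm

theorem permGroup_productMap_le_wreathSubgroup (σ : Y → Perm Y) (d : Y → Y → Perm Y) :
    permGroup (productMap σ d) ≤ wreathSubgroup (Subgroup.closure (Set.range σ))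
      (Subgroup.closure {g | ∃ i k, d i k = g}) := by
  rw [permGroup, Subgroup.closure_le]
  rintro g ⟨⟨i, j⟩, hg⟩
  exact ⟨σ j, Subgroup.subset_closure ⟨j, rfl⟩, fun k =>
    ⟨d i (σ j k), Subgroup.subset_closure ⟨i, _, rfl⟩, fun l => hg (k, l)⟩⟩

end ProductMap

/-- for an indecomposable irretractable solution on `(ℤ/(p))²` of
the special product form, both `F = ⟨σ_j⟩` and `W = ⟨d_{i,k}⟩` have a normal
subgroup of order `p` acting transitively on `ℤ/(p)`, with cyclic quotient of
order prime to `p`. -/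
theorem F_and_W_abelian_by_cyclic (p : ℕ) [Fact p.Prime]
    (σ : ZMod p → Equiv.Perm (ZMod p)) (d : ZMod p → ZMod p → Equiv.Perm (ZMod p))
    (r : (ZMod p × ZMod p) × (ZMod p × ZMod p) → (ZMod p × ZMod p) × (ZMod p × ZMod p))
    (hr : ∀ i j k l : ZMod p,
      r ((i, j), (k, l)) = ((σ j k, d i (σ j k) l),
        ((σ (d i (σ j k) l))⁻¹ i, (d (σ j k) i)⁻¹ j)))
    (hsol : IsYBSolution r) (hind : IsIndecomposable r) (hirr : IsIrretractable r) :
    (∃ A : Subgroup ↥(Subgroup.closure (Set.range σ)), ∃ hA : A.Normal,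
      Nat.card ↥A = p ∧
      (∀ x y : ZMod p, ∃ g : ↥(Subgroup.closure (Set.range σ)),
        g ∈ A ∧ (g : Equiv.Perm (ZMod p)) x = y) ∧
      (haveI := hA; IsCyclic (↥(Subgroup.closure (Set.range σ)) ⧸ A)) ∧
      ¬ (p ∣ Nat.card (↥(Subgroup.closure (Set.range σ)) ⧸ A))) ∧
    (∃ A' : Subgroup ↥(Subgroup.closure {g : Equiv.Perm (ZMod p) | ∃ i k, d i k = g}),
      ∃ hA' : A'.Normal,
      Nat.card ↥A' = p ∧
      (∀ x y : ZMod p,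
        ∃ g : ↥(Subgroup.closure {g : Equiv.Perm (ZMod p) | ∃ i k, d i k = g}),
        g ∈ A' ∧ (g : Equiv.Perm (ZMod p)) x = y) ∧
      (haveI := hA';
        IsCyclic (↥(Subgroup.closure {g : Equiv.Perm (ZMod p) | ∃ i k, d i k = g}) ⧸ A')) ∧
      ¬ (p ∣ Nat.card
          (↥(Subgroup.closure {g : Equiv.Perm (ZMod p) | ∃ i k, d i k = g}) ⧸ A'))) := by
  obtain rfl : r = productMap σ d := funext fun ⟨⟨i, j⟩, k, l⟩ => hr i j k l
  have hσ := injective_of_isIrretractable_productMap hirr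
  have hrel := mul_eq_mul_of_isYBSolution_productMap hsol
  obtain ⟨hF, hW⟩ :=
    isPretransitive_of_le_wreathSubgroup (permGroup_productMap_le_wreathSubgroup σ d) hind
  have hX : Nat.card (ZMod p) = p := Nat.card_zmod p
  have hpX : (Nat.card (ZMod p)).Prime := by rw [hX]; exact Fact.out
  have hK := (card_diffSubgroup (hrel 0 0) hσ hpX).trans hX
  have := isPretransitive_diffSubgroup (hrel 0 0) hσ hpX
  have hFK := closure_range_le_normalizer_diffSubgroup (hrel 0 0)
  obtain ⟨mF, hmF⟩ := exists_normalizer_le_affineSubgroup hX _ hK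
  obtain ⟨mW, hmW⟩ := exists_closure_le_affineSubgroup hX _ hK hσ 0 (inv_mul_mem_diffSubgroup 0)
    (hFK (Subgroup.subset_closure ⟨0, rfl⟩)) {g | ∃ i k, d i k = g}
    fun _ ⟨i, a, hδ⟩ => ⟨_, hδ ▸ hrel i a 0⟩
  exact ⟨exists_normal_transitive_of_le_affineSubgroup mF _ (hFK.trans hmF),
    exists_normal_transitive_of_le_affineSubgroup mW _ hmW⟩
end
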